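/- arXiv:math/0605370 — 3 statements merged into one kernel-verified Lean document; each statement's English description precedes it below -/
import Mathlib

section
/- Let D ⊆ ℝ^d be a measurable set, let 0 < α < 2, and let q: (0,∞) × D × D → [0,∞) be a measurable kernel satisfying: q_t(x,y) = q_t(y,x) for all t > 0 and x, y ∈ D; the Chapman–Kolmogorov equation q_{s+t}(x,y) = ∫_D q_s(x,z) q_t(z,y) dz for all s, t > 0; the sub-Markov property ∫_D q_t(x,z) dz ≤ 1 for all t > 0 and x ∈ D; and sup_{x,y ∈ D} q_t(x,y) ≤ c₁ t^{−d/α} for every t > 0. Set E(x) = ∫_0^∞ ∫_D q_t(x,z) dz dt. Then there exists a constant C = C(c₁, d, α) such that q_t(x,y) ≤ C E(x) E(y) / t^{2 + d/α} for all t > 0 and all x, y ∈ D. -/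
/-!
Let `M_s(x) = ∫_D q_s(x,z) dz`. By Chapman–Kolmogorov and the sub-Markov property, `s ↦ M_s(x)`
is nonincreasing, so `(t/4) M_{t/4}(x) ≤ ∫_0^{t/4} M_s(x) ds ≤ E(x)`. Splitting
`t = t/4 + t/2 + t/4` and bounding the middle factor by the on-diagonal bound at time `t/2`,
`q_t(x,y) ≤ M_{t/4}(x) · c₁ (t/2)^{-d/α} · M_{t/4}(y)`, using symmetry to turn the last integral
into a mass. Both masses are at most `(4/t) E`, which gives the bound with
`C = 16 c₁ 2^{d/α}`.
-/

open MeasureTheory Set Function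
open scoped ENNReal

section SubMarkovKernel

variable {X : Type*} [MeasurableSpace X] {μ : Measure X} {D : Set X} {q : ℝ → X → X → ℝ≥0∞}

theorem setLIntegral_kernel_add_le [SFinite μ] (hD : MeasurableSet D)
    (hq : ∀ s, Measurable (uncurry (q s)))
    (hCK : ∀ s > (0 : ℝ), ∀ t > (0 : ℝ), ∀ x ∈ D, ∀ y ∈ D,
      q (s + t) x y = ∫⁻ z in D, q s x z * q t z y ∂μ)
    (hsub : ∀ t > (0 : ℝ), ∀ x ∈ D, ∫⁻ z in D, q t x z ∂μ ≤ 1)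
    {x : X} (hx : x ∈ D) {s r : ℝ} (hs : 0 < s) (hr : 0 < r) :
    ∫⁻ z in D, q (s + r) x z ∂μ ≤ ∫⁻ z in D, q s x z ∂μ := by
  have hmeas : Measurable (uncurry fun z w => q s x w * q r w z) :=
    ((hq s).comp (measurable_const.prodMk measurable_snd)).mul
      ((hq r).comp (measurable_snd.prodMk measurable_fst))
  calc ∫⁻ z in D, q (s + r) x z ∂μ
      = ∫⁻ z in D, ∫⁻ w in D, q s x w * q r w z ∂μ ∂μ :=
        setLIntegral_congr_fun hD fun z hz => hCK s hs r hr x hx z hz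
    _ = ∫⁻ w in D, q s x w * ∫⁻ z in D, q r w z ∂μ ∂μ := by
        rw [lintegral_lintegral_swap hmeas.aemeasurable]
        exact lintegral_congr fun w => lintegral_const_mul _ ((hq r).comp measurable_prodMk_left)
    _ ≤ ∫⁻ w in D, q s x w * 1 ∂μ :=
        setLIntegral_mono' hD fun w hw => mul_le_mul_right (hsub r hr w hw) _
    _ = ∫⁻ z in D, q s x z ∂μ := by simp_rw [mul_one]

theorem antitoneOn_setLIntegral_kernel [SFinite μ] (hD : MeasurableSet D)
    (hq : ∀ s, Measurable (uncurry (q s)))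
    (hCK : ∀ s > (0 : ℝ), ∀ t > (0 : ℝ), ∀ x ∈ D, ∀ y ∈ D,
      q (s + t) x y = ∫⁻ z in D, q s x z * q t z y ∂μ)
    (hsub : ∀ t > (0 : ℝ), ∀ x ∈ D, ∫⁻ z in D, q t x z ∂μ ≤ 1)
    {x : X} (hx : x ∈ D) :
    AntitoneOn (fun s => ∫⁻ z in D, q s x z ∂μ) (Ioi 0) := by
  intro s hs s' _ hss'
  rcases hss'.eq_or_lt with rfl | hlt
  · exact le_rfl
  · simpa using setLIntegral_kernel_add_le hD hq hCK hsub hx hs (sub_pos.2 hlt)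

theorem kernel_le_setLIntegral_mul_setLIntegral (hD : MeasurableSet D)
    (hq : ∀ s, Measurable (uncurry (q s)))
    (hCK : ∀ s > (0 : ℝ), ∀ t > (0 : ℝ), ∀ x ∈ D, ∀ y ∈ D,
      q (s + t) x y = ∫⁻ z in D, q s x z * q t z y ∂μ)
    {a b c : ℝ} (ha : 0 < a) (hb : 0 < b) (hc : 0 < c)
    (hsymm : ∀ x ∈ D, ∀ y ∈ D, q c x y = q c y x)
    {K : ℝ≥0∞} (hbd : ∀ x ∈ D, ∀ y ∈ D, q b x y ≤ K)
    {x y : X} (hx : x ∈ D) (hy : y ∈ D) :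
    q (a + (b + c)) x y ≤ (∫⁻ z in D, q a x z ∂μ) * (K * ∫⁻ z in D, q c y z ∂μ) := by
  have hmiddle : ∀ z ∈ D, q (b + c) z y ≤ K * ∫⁻ w in D, q c y w ∂μ := fun z hz =>
    calc q (b + c) z y = ∫⁻ w in D, q b z w * q c w y ∂μ := hCK b hb c hc z hz y hy
      _ ≤ ∫⁻ w in D, K * q c y w ∂μ := setLIntegral_mono' hD fun w hw => by
          rw [hsymm w hw y hy]; exact mul_le_mul_left (hbd z hz w hw) _
      _ = K * ∫⁻ w in D, q c y w ∂μ := lintegral_const_mul K ((hq c).comp measurable_prodMk_left)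
  calc q (a + (b + c)) x y = ∫⁻ z in D, q a x z * q (b + c) z y ∂μ :=
        hCK a ha (b + c) (by positivity) x hx y hy
    _ ≤ ∫⁻ z in D, q a x z * (K * ∫⁻ w in D, q c y w ∂μ) ∂μ :=
        setLIntegral_mono' hD fun z hz => mul_le_mul_right (hmiddle z hz) _
    _ = _ := lintegral_mul_const _ ((hq a).comp measurable_prodMk_left)

end SubMarkovKernel

theorem ofReal_mul_le_setLIntegral_Ioi_of_antitoneOn {f : ℝ → ℝ≥0∞}
    (hf : AntitoneOn f (Ioi 0)) (t : ℝ) :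
    ENNReal.ofReal t * f t ≤ ∫⁻ s in Ioi 0, f s :=
  calc ENNReal.ofReal t * f t = ∫⁻ _ in Ioo 0 t, f t := by
        rw [setLIntegral_const, Real.volume_Ioo, sub_zero, mul_comm]
    _ ≤ ∫⁻ s in Ioo 0 t, f s := setLIntegral_mono' measurableSet_Ioo fun s hs =>
        hf hs.1 (hs.1.trans hs.2) hs.2.le
    _ ≤ ∫⁻ s in Ioi 0, f s := lintegral_mono_set Ioo_subset_Ioi_self

theorem le_ofReal_inv_mul_of_ofReal_mul_le {t : ℝ} (ht : 0 < t) {a b : ℝ≥0∞}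
    (h : ENNReal.ofReal t * a ≤ b) : a ≤ ENNReal.ofReal t⁻¹ * b :=
  calc a = ENNReal.ofReal t⁻¹ * (ENNReal.ofReal t * a) := by
        rw [← mul_assoc, ← ENNReal.ofReal_mul (by positivity), inv_mul_cancel₀ ht.ne',
          ENNReal.ofReal_one, one_mul]
    _ ≤ ENNReal.ofReal t⁻¹ * b := by gcongr

theorem quarter_inv_mul_rpow_half_mul_quarter_inv {t : ℝ} (ht : 0 < t) (c p : ℝ) :
    (t / 4)⁻¹ * (c * (t / 2) ^ (-p)) * (t / 4)⁻¹ = 16 * c * 2 ^ p / t ^ (2 + p) := by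
  rw [Real.rpow_neg (by positivity), Real.div_rpow ht.le zero_le_two, Real.rpow_add ht,
    Real.rpow_two]
  have : 0 < t ^ p := Real.rpow_pos_of_pos ht p
  field_simp
  ring

theorem killed_stable_density_bound_general (d : ℕ) (α : ℝ)
    (c₁ : ℝ) (hc₁ : 0 < c₁) :
    ∃ C : ℝ, 0 < C ∧
      ∀ (D : Set (EuclideanSpace ℝ (Fin d))), MeasurableSet D →
      ∀ q : ℝ → EuclideanSpace ℝ (Fin d) → EuclideanSpace ℝ (Fin d) → ENNReal,
        Measurable (fun tp : ℝ × EuclideanSpace ℝ (Fin d) × EuclideanSpace ℝ (Fin d) =>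
          q tp.1 tp.2.1 tp.2.2) →
        (∀ t > (0 : ℝ), ∀ x ∈ D, ∀ y ∈ D, q t x y = q t y x) →
        (∀ s > (0 : ℝ), ∀ t > (0 : ℝ), ∀ x ∈ D, ∀ y ∈ D,
          q (s + t) x y = ∫⁻ z in D, q s x z * q t z y) →
        (∀ t > (0 : ℝ), ∀ x ∈ D, (∫⁻ z in D, q t x z) ≤ 1) →
        (∀ t > (0 : ℝ), ∀ x ∈ D, ∀ y ∈ D,
          q t x y ≤ ENNReal.ofReal (c₁ * t ^ (-(d : ℝ) / α))) →
        ∀ t > (0 : ℝ), ∀ x ∈ D, ∀ y ∈ D,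
          q t x y ≤ ENNReal.ofReal C *
            ((∫⁻ s in Set.Ioi (0 : ℝ), ∫⁻ z in D, q s x z) *
              (∫⁻ s in Set.Ioi (0 : ℝ), ∫⁻ z in D, q s y z)) /
            ENNReal.ofReal (t ^ (2 + (d : ℝ) / α)) := by
  refine ⟨16 * c₁ * 2 ^ ((d : ℝ) / α), by positivity, ?_⟩
  intro D hD q hq hsymm hCK hsub hbd t ht x hx y hy
  have hqs : ∀ s, Measurable (uncurry (q s)) := fun s =>
    hq.comp (measurable_const.prodMk measurable_id)
  have hmass : ∀ x ∈ D, ∫⁻ z in D, q (t / 4) x z ≤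
      ENNReal.ofReal (t / 4)⁻¹ * ∫⁻ s in Ioi 0, ∫⁻ z in D, q s x z := fun x hx =>
    le_ofReal_inv_mul_of_ofReal_mul_le (by positivity) <|
      ofReal_mul_le_setLIntegral_Ioi_of_antitoneOn
        (antitoneOn_setLIntegral_kernel hD hqs hCK hsub hx) _
  have hsplit := kernel_le_setLIntegral_mul_setLIntegral hD hqs hCK
    (by positivity : 0 < t / 4) (by positivity : 0 < t / 2) (by positivity : 0 < t / 4)
    (hsymm _ (by positivity)) (hbd _ (by positivity)) hx hy
  rw [show t / 4 + (t / 2 + t / 4) = t by ring] at hsplit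
  refine hsplit.trans ((mul_le_mul' (hmass x hx) (mul_le_mul_right (hmass y hy) _)).trans_eq ?_)
  calc _ = ENNReal.ofReal ((t / 4)⁻¹ * (c₁ * (t / 2) ^ (-((d : ℝ) / α))) * (t / 4)⁻¹) *
        ((∫⁻ s in Ioi 0, ∫⁻ z in D, q s x z) * ∫⁻ s in Ioi 0, ∫⁻ z in D, q s y z) := by
        have h4 : 0 ≤ (t / 4)⁻¹ := by positivity
        rw [ENNReal.ofReal_mul (mul_nonneg h4 (by positivity)), ENNReal.ofReal_mul h4, neg_div]
        ring
    _ = _ := by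
        rw [quarter_inv_mul_rpow_half_mul_quarter_inv ht, ENNReal.ofReal_div_of_pos (by positivity),
          ENNReal.div_eq_inv_mul, ENNReal.div_eq_inv_mul]
        ring

/-- Upper bound for a symmetric sub-Markov kernel with a stable on-diagonal bound: if
`q` is symmetric on `D`, satisfies the Chapman–Kolmogorov equation and the sub-Markov
property on `D`, and `q_t(x,y) ≤ c₁ t^{-d/α}` for all `t > 0`, then with
`E(x) = ∫_0^∞ ∫_D q_t(x,z) dz dt` there is a constant `C = C(c₁,d,α)` such that
`q_t(x,y) ≤ C E(x) E(y) / t^{2+d/α}` for all `t > 0` and `x, y ∈ D`. -/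
theorem killed_stable_density_bound (d : ℕ) (α : ℝ) (hα1 : 0 < α) (hα2 : α < 2)
    (c₁ : ℝ) (hc₁ : 0 < c₁) :
    ∃ C : ℝ, 0 < C ∧
      ∀ (D : Set (EuclideanSpace ℝ (Fin d))), MeasurableSet D →
      ∀ q : ℝ → EuclideanSpace ℝ (Fin d) → EuclideanSpace ℝ (Fin d) → ENNReal,
        Measurable (fun tp : ℝ × EuclideanSpace ℝ (Fin d) × EuclideanSpace ℝ (Fin d) =>
          q tp.1 tp.2.1 tp.2.2) →
        (∀ t > (0 : ℝ), ∀ x ∈ D, ∀ y ∈ D, q t x y = q t y x) →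
        (∀ s > (0 : ℝ), ∀ t > (0 : ℝ), ∀ x ∈ D, ∀ y ∈ D,
          q (s + t) x y = ∫⁻ z in D, q s x z * q t z y) →
        (∀ t > (0 : ℝ), ∀ x ∈ D, (∫⁻ z in D, q t x z) ≤ 1) →
        (∀ t > (0 : ℝ), ∀ x ∈ D, ∀ y ∈ D,
          q t x y ≤ ENNReal.ofReal (c₁ * t ^ (-(d : ℝ) / α))) →
        ∀ t > (0 : ℝ), ∀ x ∈ D, ∀ y ∈ D,
          q t x y ≤ ENNReal.ofReal C *
            ((∫⁻ s in Set.Ioi (0 : ℝ), ∫⁻ z in D, q s x z) *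
              (∫⁻ s in Set.Ioi (0 : ℝ), ∫⁻ z in D, q s y z)) /
            ENNReal.ofReal (t ^ (2 + (d : ℝ) / α)) :=
  killed_stable_density_bound_general d α c₁ hc₁
end

section
/- Let D ⊂ ℝ be a nonempty bounded open interval, let 1 < α < 2 and 0 < ϱ < 1. For x, w ∈ D set K(x,w) = min{ (δ_D(x) δ_D(w))^{(α−1)/2}, (δ_D(x) δ_D(w))^{α/2} / |x−w| }. Then there exists a constant C = C(α, ϱ, diam(D)) such that for all x, y ∈ D with x ≠ y: ∫_D K(x,w) |w−y|^{ϱ−1} dw ≤ C δ_D(x)^{α/2} |x−y|^{ϱ−1}. -/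
open MeasureTheory Set
open scoped ENNReal

lemma lint_shift (c : ℝ) (T : Set ℝ) (g : ℝ → ℝ≥0∞) :
    ∫⁻ w in (fun w => w - c) ⁻¹' T, g (w - c) = ∫⁻ t in T, g t :=
  (measurePreserving_sub_right volume c).setLIntegral_comp_preimage_emb
    (MeasurableEquiv.subRight c).measurableEmbedding g T

lemma lint_neg (T : Set ℝ) (g : ℝ → ℝ≥0∞) :
    ∫⁻ w in (fun w => -w) ⁻¹' T, g (-w) = ∫⁻ t in T, g t :=
  (Measure.measurePreserving_neg volume).setLIntegral_comp_preimage_emb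
    (MeasurableEquiv.neg ℝ).measurableEmbedding g T

lemma lint_rpow_Ioc (R γ : ℝ) (hR : 0 < R) (hγ : -1 < γ) :
    ∫⁻ t in Set.Ioc 0 R, ENNReal.ofReal (t ^ γ) = ENNReal.ofReal (R ^ (γ + 1) / (γ + 1)) := by
  have hint : IntervalIntegrable (fun t : ℝ => t ^ γ) volume 0 R :=
    intervalIntegral.intervalIntegrable_rpow' hγ
  have hIOn : IntegrableOn (fun t : ℝ => t ^ γ) (Set.Ioc 0 R) volume := by
    rwa [intervalIntegrable_iff_integrableOn_Ioc_of_le hR.le] at hint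
  have hnn : 0 ≤ᵐ[volume.restrict (Set.Ioc 0 R)] fun t : ℝ => t ^ γ := by
    filter_upwards [ae_restrict_mem measurableSet_Ioc] with t ht
    exact Real.rpow_nonneg ht.1.le γ
  rw [← ofReal_integral_eq_lintegral_ofReal hIOn hnn]
  congr 1
  rw [← intervalIntegral.integral_of_le hR.le,
    integral_rpow (Or.inl hγ), Real.zero_rpow (by linarith), sub_zero]

lemma lint_rpow_Ioi (R γ : ℝ) (hR : 0 < R) (hγ : γ < -1) :
    ∫⁻ t in Set.Ioi R, ENNReal.ofReal (t ^ γ) = ENNReal.ofReal (R ^ (γ + 1) / (-(γ + 1))) := by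
  have hIOn : IntegrableOn (fun t : ℝ => t ^ γ) (Set.Ioi R) volume :=
    integrableOn_Ioi_rpow_of_lt hγ hR
  have hnn : 0 ≤ᵐ[volume.restrict (Set.Ioi R)] fun t : ℝ => t ^ γ := by
    filter_upwards [ae_restrict_mem measurableSet_Ioi] with t ht
    exact Real.rpow_nonneg (hR.le.trans (le_of_lt ht)) γ
  rw [← ofReal_integral_eq_lintegral_ofReal hIOn hnn]
  congr 1
  rw [integral_Ioi_rpow_of_lt hγ hR, neg_div, div_neg]


lemma core_ball (c R γ : ℝ) (hR : 0 < R) (hγ : -1 < γ) :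
    ∫⁻ w in {w : ℝ | |w - c| ≤ R}, ENNReal.ofReal (|w - c| ^ γ)
      ≤ ENNReal.ofReal (2 * (R ^ (γ + 1) / (γ + 1))) := by
  set S1 : Set ℝ := (fun w => w - c) ⁻¹' Set.Ioc 0 R with hS1
  set S2 : Set ℝ := (fun w => w - c) ⁻¹' ((fun t => -t) ⁻¹' Set.Ioc 0 R) with hS2
  have hmS1 : MeasurableSet S1 := (measurable_id.sub_const c) measurableSet_Ioc
  have hmS2 : MeasurableSet S2 :=
    (measurable_id.sub_const c) (measurable_neg measurableSet_Ioc)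
  have hcover : {w : ℝ | |w - c| ≤ R} ⊆ (S1 ∪ S2) ∪ {c} := by
    intro w hw
    simp only [Set.mem_setOf_eq] at hw
    rcases lt_trichotomy w c with h | h | h
    · refine Or.inl (Or.inr ?_)
      refine ⟨neg_pos.2 (sub_neg.2 h), ?_⟩
      show -(w - c) ≤ R
      rw [← abs_of_neg (sub_neg.2 h)]; exact hw
    · exact Or.inr h
    · refine Or.inl (Or.inl ?_)
      refine ⟨sub_pos.2 h, ?_⟩
      show w - c ≤ R
      rw [← abs_of_pos (sub_pos.2 h)]; exact hw
  have h1 : (0:ℝ) < γ + 1 := by linarith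
  have ha : (0:ℝ) ≤ R ^ (γ + 1) / (γ + 1) := by positivity
  have p1 : ∫⁻ w in S1, ENNReal.ofReal (|w - c| ^ γ)
      = ENNReal.ofReal (R ^ (γ + 1) / (γ + 1)) := by
    rw [setLIntegral_congr_fun hmS1 (fun w hw => by
      have h0 : (0:ℝ) < w - c := (Set.mem_Ioc.1 (Set.mem_preimage.1 hw)).1
      rw [abs_of_pos h0])]
    exact (lint_shift c _ (fun t => ENNReal.ofReal (t ^ γ))).trans (lint_rpow_Ioc R γ hR hγ)
  have p2 : ∫⁻ w in S2, ENNReal.ofReal (|w - c| ^ γ)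
      = ENNReal.ofReal (R ^ (γ + 1) / (γ + 1)) := by
    rw [setLIntegral_congr_fun hmS2 (fun w hw => by
      have h0 : (0:ℝ) < -(w - c) :=
        (Set.mem_Ioc.1 (Set.mem_preimage.1 (Set.mem_preimage.1 hw))).1
      rw [abs_of_neg (neg_pos.1 h0)])]
    exact (lint_shift c _ (fun t => ENNReal.ofReal ((-t) ^ γ))).trans
      ((lint_neg _ (fun t => ENNReal.ofReal (t ^ γ))).trans (lint_rpow_Ioc R γ hR hγ))
  calc ∫⁻ w in {w : ℝ | |w - c| ≤ R}, ENNReal.ofReal (|w - c| ^ γ)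
      ≤ ∫⁻ w in (S1 ∪ S2) ∪ {c}, ENNReal.ofReal (|w - c| ^ γ) :=
        lintegral_mono_set hcover
    _ ≤ (∫⁻ w in S1 ∪ S2, ENNReal.ofReal (|w - c| ^ γ))
        + ∫⁻ w in ({c} : Set ℝ), ENNReal.ofReal (|w - c| ^ γ) := lintegral_union_le _ _ _
    _ ≤ ((∫⁻ w in S1, ENNReal.ofReal (|w - c| ^ γ))
        + ∫⁻ w in S2, ENNReal.ofReal (|w - c| ^ γ)) + 0 := by
          gcongr
          · exact lintegral_union_le _ _ _
          · exact le_of_eq (setLIntegral_measure_zero _ _ (measure_singleton c))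
    _ = ENNReal.ofReal (2 * (R ^ (γ + 1) / (γ + 1))) := by
        rw [p1, p2, add_zero, ← ENNReal.ofReal_add ha ha, two_mul]

lemma core_tail (c R γ : ℝ) (hR : 0 < R) (hγ : γ < -1) :
    ∫⁻ w in {w : ℝ | R < |w - c|}, ENNReal.ofReal (|w - c| ^ γ)
      ≤ ENNReal.ofReal (2 * (R ^ (γ + 1) / (-(γ + 1)))) := by
  set S1 : Set ℝ := (fun w => w - c) ⁻¹' Set.Ioi R with hS1
  set S2 : Set ℝ := (fun w => w - c) ⁻¹' ((fun t => -t) ⁻¹' Set.Ioi R) with hS2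
  have hmS1 : MeasurableSet S1 := (measurable_id.sub_const c) measurableSet_Ioi
  have hmS2 : MeasurableSet S2 :=
    (measurable_id.sub_const c) (measurable_neg measurableSet_Ioi)
  have hcover : {w : ℝ | R < |w - c|} ⊆ S1 ∪ S2 := by
    intro w hw
    simp only [Set.mem_setOf_eq] at hw
    rcases lt_trichotomy w c with h | h | h
    · refine Or.inr ?_
      have : |w - c| = -(w - c) := abs_of_neg (sub_neg.2 h)
      exact Set.mem_preimage.2 (Set.mem_preimage.2 (by simpa [← this] using hw))
    · exfalso; rw [h] at hw; simp at hw; linarith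
    · refine Or.inl ?_
      have : |w - c| = w - c := abs_of_pos (sub_pos.2 h)
      exact Set.mem_preimage.2 (by rw [Set.mem_Ioi, ← this]; exact hw)
  have ha : (0:ℝ) ≤ R ^ (γ + 1) / (-(γ + 1)) := by
    apply div_nonneg (Real.rpow_nonneg hR.le _); linarith
  have p1 : ∫⁻ w in S1, ENNReal.ofReal (|w - c| ^ γ)
      = ENNReal.ofReal (R ^ (γ + 1) / (-(γ + 1))) := by
    rw [setLIntegral_congr_fun hmS1 (fun w hw => by
      have h0 : R < w - c := Set.mem_Ioi.1 (Set.mem_preimage.1 hw)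
      rw [abs_of_pos (lt_trans hR h0)])]
    exact (lint_shift c _ (fun t => ENNReal.ofReal (t ^ γ))).trans (lint_rpow_Ioi R γ hR hγ)
  have p2 : ∫⁻ w in S2, ENNReal.ofReal (|w - c| ^ γ)
      = ENNReal.ofReal (R ^ (γ + 1) / (-(γ + 1))) := by
    rw [setLIntegral_congr_fun hmS2 (fun w hw => by
      have h0 : R < -(w - c) := Set.mem_Ioi.1 (Set.mem_preimage.1 (Set.mem_preimage.1 hw))
      rw [abs_of_neg (by linarith : w - c < 0)])]
    exact (lint_shift c _ (fun t => ENNReal.ofReal ((-t) ^ γ))).trans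
      ((lint_neg _ (fun t => ENNReal.ofReal (t ^ γ))).trans (lint_rpow_Ioi R γ hR hγ))
  calc ∫⁻ w in {w : ℝ | R < |w - c|}, ENNReal.ofReal (|w - c| ^ γ)
      ≤ ∫⁻ w in S1 ∪ S2, ENNReal.ofReal (|w - c| ^ γ) := lintegral_mono_set hcover
    _ ≤ (∫⁻ w in S1, ENNReal.ofReal (|w - c| ^ γ))
        + ∫⁻ w in S2, ENNReal.ofReal (|w - c| ^ γ) := lintegral_union_le _ _ _
    _ = ENNReal.ofReal (2 * (R ^ (γ + 1) / (-(γ + 1)))) := by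
        rw [p1, p2, ← ENNReal.ofReal_add ha ha, two_mul]

lemma conv_est (p q x y β ϱ : ℝ) (hpq : p < q) (hx : x ∈ Set.Ioo p q) (hy : y ∈ Set.Ioo p q)
    (hxy : x ≠ y) (hβ0 : 0 < β) (hϱ0 : 0 < ϱ) (hϱ1 : ϱ < 1) (hsum : β + ϱ < 1) :
    ∫⁻ w in Set.Ioo p q, ENNReal.ofReal (|x - w| ^ (β - 1) * |w - y| ^ (ϱ - 1))
      ≤ ENNReal.ofReal ((q - p) ^ β * (4 / β + 4 / ϱ + 12 / (1 - β - ϱ)) * |x - y| ^ (ϱ - 1)) := by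
  set L : ℝ := q - p with hL
  set s : ℝ := |x - y| with hs
  have hL0 : 0 < L := sub_pos.2 hpq
  have hs0 : 0 < s := abs_pos.2 (sub_ne_zero.2 hxy)
  have hsL : s < L := by
    rw [hs, abs_sub_lt_iff]
    constructor <;> [linarith [hx.1, hx.2, hy.1, hy.2]; linarith [hx.1, hx.2, hy.1, hy.2]]
  have hs2 : (0:ℝ) < s / 2 := by linarith
  set A : Set ℝ := {w : ℝ | |w - x| ≤ s / 2} with hA
  set B : Set ℝ := {w : ℝ | |w - y| ≤ s / 2} with hB
  have hmA : MeasurableSet A := (measurable_id.sub_const x).abs measurableSet_Iic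
  have hmB : MeasurableSet B := (measurable_id.sub_const y).abs measurableSet_Iic
  have hcover : Set.Ioo p q ⊆ A ∪ (B ∪ (Aᶜ ∩ Bᶜ)) := by
    intro w _
    by_cases h1 : w ∈ A
    · exact Or.inl h1
    by_cases h2 : w ∈ B
    · exact Or.inr (Or.inl h2)
    exact Or.inr (Or.inr ⟨h1, h2⟩)
  set f : ℝ → ℝ≥0∞ := fun w => ENNReal.ofReal (|x - w| ^ (β - 1) * |w - y| ^ (ϱ - 1)) with hf
  -- piece A
  have pA : ∫⁻ w in A, f w
      ≤ ENNReal.ofReal ((s/2) ^ (ϱ - 1)) * ENNReal.ofReal (2 * (L ^ (β - 1 + 1) / (β - 1 + 1))) := by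
    have step1 : ∫⁻ w in A, f w
        ≤ ∫⁻ w in A, ENNReal.ofReal ((s/2) ^ (ϱ - 1)) * ENNReal.ofReal (|w - x| ^ (β - 1)) := by
      refine setLIntegral_mono' hmA fun w hw => ?_
      have hwx : |w - x| ≤ s / 2 := hw
      have hwy : s / 2 ≤ |w - y| := by
        have h3 : |x - y| ≤ |x - w| + |w - y| := abs_sub_le x w y
        have h4 : |x - w| = |w - x| := abs_sub_comm x w
        linarith
      have h5 : |w - y| ^ (ϱ - 1) ≤ (s/2) ^ (ϱ - 1) :=
        Real.rpow_le_rpow_of_nonpos hs2 hwy (by linarith)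
      rw [← ENNReal.ofReal_mul (Real.rpow_nonneg hs2.le _)]
      refine ENNReal.ofReal_le_ofReal ?_
      rw [abs_sub_comm x w]
      calc |w - x| ^ (β - 1) * |w - y| ^ (ϱ - 1)
          ≤ |w - x| ^ (β - 1) * (s/2) ^ (ϱ - 1) :=
            mul_le_mul_of_nonneg_left h5 (Real.rpow_nonneg (abs_nonneg _) _)
        _ = (s/2) ^ (ϱ - 1) * |w - x| ^ (β - 1) := by ring
    refine step1.trans ?_
    rw [lintegral_const_mul' _ _ ENNReal.ofReal_ne_top]
    refine mul_le_mul_right ?_ _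
    calc ∫⁻ w in A, ENNReal.ofReal (|w - x| ^ (β - 1))
        ≤ ∫⁻ w in {w : ℝ | |w - x| ≤ L}, ENNReal.ofReal (|w - x| ^ (β - 1)) := by
          refine lintegral_mono_set fun w hw => ?_
          have : |w - x| ≤ s / 2 := hw
          exact le_trans this (by linarith)
      _ ≤ ENNReal.ofReal (2 * (L ^ (β - 1 + 1) / (β - 1 + 1))) :=
          core_ball x L (β - 1) hL0 (by linarith)
  -- piece B
  have pB : ∫⁻ w in B, f w
      ≤ ENNReal.ofReal ((s/2) ^ (β - 1)) * ENNReal.ofReal (2 * ((s/2) ^ (ϱ - 1 + 1) / (ϱ - 1 + 1))) := by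
    have step1 : ∫⁻ w in B, f w
        ≤ ∫⁻ w in B, ENNReal.ofReal ((s/2) ^ (β - 1)) * ENNReal.ofReal (|w - y| ^ (ϱ - 1)) := by
      refine setLIntegral_mono' hmB fun w hw => ?_
      have hwy : |w - y| ≤ s / 2 := hw
      have hwx : s / 2 ≤ |x - w| := by
        have h3 : |x - y| ≤ |x - w| + |w - y| := abs_sub_le x w y
        linarith
      have h5 : |x - w| ^ (β - 1) ≤ (s/2) ^ (β - 1) :=
        Real.rpow_le_rpow_of_nonpos hs2 hwx (by linarith)
      rw [← ENNReal.ofReal_mul (Real.rpow_nonneg hs2.le _)]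
      exact ENNReal.ofReal_le_ofReal
        (mul_le_mul_of_nonneg_right h5 (Real.rpow_nonneg (abs_nonneg _) _))
    refine step1.trans ?_
    rw [lintegral_const_mul' _ _ ENNReal.ofReal_ne_top]
    exact mul_le_mul_right (core_ball y (s/2) (ϱ - 1) hs2 (by linarith)) _
  -- piece C
  have pC : ∫⁻ w in Aᶜ ∩ Bᶜ, f w
      ≤ ENNReal.ofReal ((3:ℝ) ^ (1 - β))
        * ENNReal.ofReal (2 * ((s/2) ^ (β + ϱ - 2 + 1) / (-(β + ϱ - 2 + 1)))) := by
    have step1 : ∫⁻ w in Aᶜ ∩ Bᶜ, f w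
        ≤ ∫⁻ w in Aᶜ ∩ Bᶜ,
            ENNReal.ofReal ((3:ℝ) ^ (1 - β)) * ENNReal.ofReal (|w - y| ^ (β + ϱ - 2)) := by
      refine setLIntegral_mono' (hmA.compl.inter hmB.compl) fun w hw => ?_
      have hwx : s / 2 < |w - x| := lt_of_not_ge hw.1
      have hwy : s / 2 < |w - y| := lt_of_not_ge hw.2
      have hwy0 : (0:ℝ) < |w - y| := lt_trans hs2 hwy
      have h3 : |w - y| ≤ 3 * |w - x| := by
        have h4 : |w - y| ≤ |w - x| + |x - y| := abs_sub_le w x y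
        linarith
      have h5 : |w - y| / 3 ≤ |x - w| := by
        rw [abs_sub_comm x w]; linarith
      have h6 : |x - w| ^ (β - 1) ≤ (|w - y| / 3) ^ (β - 1) :=
        Real.rpow_le_rpow_of_nonpos (by linarith) h5 (by linarith)
      have h7 : (|w - y| / 3) ^ (β - 1) = (3:ℝ) ^ (1 - β) * |w - y| ^ (β - 1) := by
        rw [Real.div_rpow (abs_nonneg _) (by norm_num : (0:ℝ) ≤ 3)]
        rw [div_eq_mul_inv, ← Real.rpow_neg (by norm_num : (0:ℝ) ≤ 3)]
        rw [show -(β - 1) = 1 - β by ring]; ring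
      rw [← ENNReal.ofReal_mul (Real.rpow_nonneg (by norm_num : (0:ℝ) ≤ 3) _)]
      refine ENNReal.ofReal_le_ofReal ?_
      calc |x - w| ^ (β - 1) * |w - y| ^ (ϱ - 1)
          ≤ ((3:ℝ) ^ (1 - β) * |w - y| ^ (β - 1)) * |w - y| ^ (ϱ - 1) := by
            refine mul_le_mul_of_nonneg_right (h6.trans (le_of_eq h7))
              (Real.rpow_nonneg (abs_nonneg _) _)
        _ = (3:ℝ) ^ (1 - β) * (|w - y| ^ (β - 1) * |w - y| ^ (ϱ - 1)) := by ring
        _ = (3:ℝ) ^ (1 - β) * |w - y| ^ (β + ϱ - 2) := by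
            rw [← Real.rpow_add hwy0, show β - 1 + (ϱ - 1) = β + ϱ - 2 by ring]
    refine step1.trans ?_
    rw [lintegral_const_mul' _ _ ENNReal.ofReal_ne_top]
    refine mul_le_mul_right ?_ _
    calc ∫⁻ w in Aᶜ ∩ Bᶜ, ENNReal.ofReal (|w - y| ^ (β + ϱ - 2))
        ≤ ∫⁻ w in {w : ℝ | s/2 < |w - y|}, ENNReal.ofReal (|w - y| ^ (β + ϱ - 2)) := by
          refine lintegral_mono_set fun w hw => ?_
          show s/2 < |w - y|
          exact lt_of_not_ge fun hle => hw.2 hle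
      _ ≤ ENNReal.ofReal (2 * ((s/2) ^ (β + ϱ - 2 + 1) / (-(β + ϱ - 2 + 1)))) :=
          core_tail y (s/2) (β + ϱ - 2) hs2 (by linarith)
  -- combine
  have ha1 : (0:ℝ) ≤ (s/2) ^ (ϱ - 1) := Real.rpow_nonneg hs2.le _
  have ha2 : (0:ℝ) ≤ (s/2) ^ (β - 1) := Real.rpow_nonneg hs2.le _
  have ha3 : (0:ℝ) ≤ (3:ℝ) ^ (1 - β) := Real.rpow_nonneg (by norm_num) _
  set a1 : ℝ := (s/2) ^ (ϱ - 1) * (2 * (L ^ (β - 1 + 1) / (β - 1 + 1))) with ha1d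
  set a2 : ℝ := (s/2) ^ (β - 1) * (2 * ((s/2) ^ (ϱ - 1 + 1) / (ϱ - 1 + 1))) with ha2d
  set a3 : ℝ := (3:ℝ) ^ (1 - β) * (2 * ((s/2) ^ (β + ϱ - 2 + 1) / (-(β + ϱ - 2 + 1)))) with ha3d
  have hnn1 : (0:ℝ) ≤ a1 := by
    rw [ha1d]; apply mul_nonneg ha1; apply mul_nonneg (by norm_num)
    apply div_nonneg (Real.rpow_nonneg hL0.le _) (by linarith)
  have hnn2 : (0:ℝ) ≤ a2 := by
    rw [ha2d]; apply mul_nonneg ha2; apply mul_nonneg (by norm_num)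
    apply div_nonneg (Real.rpow_nonneg hs2.le _) (by linarith)
  have hnn3 : (0:ℝ) ≤ a3 := by
    rw [ha3d]; apply mul_nonneg ha3; apply mul_nonneg (by norm_num)
    apply div_nonneg (Real.rpow_nonneg hs2.le _) (by linarith)
  -- real arithmetic key
  have k1 : (s/2) ^ (ϱ - 1) ≤ 2 * s ^ (ϱ - 1) := by
    rw [Real.div_rpow hs0.le (by norm_num : (0:ℝ) ≤ 2)]
    have h2 : (2:ℝ) ^ (-1:ℝ) ≤ (2:ℝ) ^ (ϱ - 1) :=
      Real.rpow_le_rpow_of_exponent_le (by norm_num) (by linarith)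
    have h2' : (2:ℝ) ^ (-1:ℝ) = 2⁻¹ := by
      rw [Real.rpow_neg (by norm_num : (0:ℝ) ≤ 2), Real.rpow_one]
    rw [h2'] at h2
    calc s ^ (ϱ - 1) / 2 ^ (ϱ - 1) ≤ s ^ (ϱ - 1) / 2⁻¹ := by
          apply div_le_div_of_nonneg_left (Real.rpow_nonneg hs0.le _) (by norm_num) h2
      _ = 2 * s ^ (ϱ - 1) := by rw [div_eq_mul_inv, inv_inv, mul_comm]
  have k2 : (s/2) ^ (β + ϱ - 1) ≤ 2 * s ^ (ϱ - 1) * L ^ β := by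
    have e1 : (s/2) ^ (β + ϱ - 1) = (s/2) ^ β * (s/2) ^ (ϱ - 1) := by
      rw [show β + ϱ - 1 = β + (ϱ - 1) by ring, Real.rpow_add hs2]
    have hb : (s/2) ^ β ≤ L ^ β :=
      Real.rpow_le_rpow hs2.le (by linarith) hβ0.le
    calc (s/2) ^ (β + ϱ - 1) = (s/2) ^ β * (s/2) ^ (ϱ - 1) := e1
      _ ≤ L ^ β * (2 * s ^ (ϱ - 1)) :=
          mul_le_mul hb k1 ha1 (Real.rpow_nonneg hL0.le _)
      _ = 2 * s ^ (ϱ - 1) * L ^ β := by ring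
  have k4 : (3:ℝ) ^ (1 - β) ≤ 3 := by
    calc (3:ℝ) ^ (1 - β) ≤ (3:ℝ) ^ (1:ℝ) :=
        Real.rpow_le_rpow_of_exponent_le (by norm_num) (by linarith)
      _ = 3 := Real.rpow_one 3
  have key : a1 + a2 + a3 ≤ L ^ β * (4 / β + 4 / ϱ + 12 / (1 - β - ϱ)) * s ^ (ϱ - 1) := by
    have hX : (0:ℝ) ≤ s ^ (ϱ - 1) := Real.rpow_nonneg hs0.le _
    have hLB : (0:ℝ) ≤ L ^ β := Real.rpow_nonneg hL0.le _
    have b1 : a1 ≤ 2 * s ^ (ϱ - 1) * (2 * (L ^ β / β)) := by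
      rw [ha1d, show β - 1 + 1 = β by ring]
      apply mul_le_mul_of_nonneg_right k1
      apply mul_nonneg (by norm_num) (div_nonneg hLB hβ0.le)
    have b2 : a2 ≤ 2 * s ^ (ϱ - 1) * L ^ β * (2 / ϱ) := by
      rw [ha2d, show ϱ - 1 + 1 = ϱ by ring]
      have e2 : (s/2) ^ (β - 1) * (2 * ((s/2) ^ ϱ / ϱ))
          = ((s/2) ^ (β - 1) * (s/2) ^ ϱ) * (2 / ϱ) := by ring
      have e3 : (s/2) ^ (β - 1) * (s/2) ^ ϱ = (s/2) ^ (β + ϱ - 1) := by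
        rw [← Real.rpow_add hs2, show β - 1 + ϱ = β + ϱ - 1 by ring]
      rw [e2, e3]
      apply mul_le_mul_of_nonneg_right k2 (div_nonneg (by norm_num) hϱ0.le)
    have b3 : a3 ≤ 3 * (2 * ((2 * s ^ (ϱ - 1) * L ^ β) / (1 - β - ϱ))) := by
      rw [ha3d, show β + ϱ - 2 + 1 = β + ϱ - 1 by ring, show -(β + ϱ - 1) = 1 - β - ϱ by ring]
      have hd : (0:ℝ) < 1 - β - ϱ := by linarith
      have inner : 2 * ((s/2) ^ (β + ϱ - 1) / (1 - β - ϱ))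
          ≤ 2 * ((2 * s ^ (ϱ - 1) * L ^ β) / (1 - β - ϱ)) := by gcongr
      refine mul_le_mul k4 inner ?_ (by norm_num)
      apply mul_nonneg (by norm_num)
      exact div_nonneg (Real.rpow_nonneg hs2.le _) hd.le
    have fin : 2 * s ^ (ϱ - 1) * (2 * (L ^ β / β)) + 2 * s ^ (ϱ - 1) * L ^ β * (2 / ϱ)
        + 3 * (2 * ((2 * s ^ (ϱ - 1) * L ^ β) / (1 - β - ϱ)))
        = L ^ β * (4 / β + 4 / ϱ + 12 / (1 - β - ϱ)) * s ^ (ϱ - 1) := by ring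
    linarith
  calc ∫⁻ w in Set.Ioo p q, f w
      ≤ ∫⁻ w in A ∪ (B ∪ (Aᶜ ∩ Bᶜ)), f w := lintegral_mono_set hcover
    _ ≤ (∫⁻ w in A, f w) + ∫⁻ w in B ∪ (Aᶜ ∩ Bᶜ), f w := lintegral_union_le _ _ _
    _ ≤ (∫⁻ w in A, f w) + ((∫⁻ w in B, f w) + ∫⁻ w in Aᶜ ∩ Bᶜ, f w) :=
        add_le_add_right (lintegral_union_le _ _ _) _
    _ ≤ ENNReal.ofReal a1 + (ENNReal.ofReal a2 + ENNReal.ofReal a3) := by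
        refine add_le_add ?_ (add_le_add ?_ ?_)
        · rw [ha1d, ENNReal.ofReal_mul ha1]; exact pA
        · rw [ha2d, ENNReal.ofReal_mul ha2]; exact pB
        · rw [ha3d, ENNReal.ofReal_mul ha3]; exact pC
    _ = ENNReal.ofReal (a1 + a2 + a3) := by
        rw [← ENNReal.ofReal_add hnn2 hnn3,
          ← ENNReal.ofReal_add hnn1 (by linarith : (0:ℝ) ≤ a2 + a3)]
        congr 1; ring
    _ ≤ ENNReal.ofReal (L ^ β * (4 / β + 4 / ϱ + 12 / (1 - β - ϱ)) * s ^ (ϱ - 1)) :=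
        ENNReal.ofReal_le_ofReal key

lemma kernel_ptwise (L δx δw r α β : ℝ) (hL0 : 0 < L) (hδx : 0 ≤ δx) (hδw : 0 ≤ δw)
    (hr : 0 ≤ r) (hrL : r ≤ L) (hδwx : δw ≤ δx + r)
    (hα1 : 1 < α) (hα2 : α < 2) (hβ0 : 0 < β) (hβ : β ≤ α / 2) :
    min ((δx * δw) ^ ((α - 1) / 2)) ((δx * δw) ^ (α / 2) / r)
      ≤ 2 * L ^ (α / 2 - β) * (δx ^ (α / 2) * r ^ (β - 1)) := by
  rcases eq_or_lt_of_le hr with hr0 | hr0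
  · -- r = 0
    have h1 : (δx * δw) ^ (α / 2) / r = 0 := by rw [← hr0, div_zero]
    have h2 : r ^ (β - 1) = 0 := by rw [← hr0, Real.zero_rpow (by linarith)]
    rw [h2, mul_zero, mul_zero]
    exact (min_le_right _ _).trans h1.le
  have hLβ : (0:ℝ) ≤ L ^ (α / 2 - β) := Real.rpow_nonneg hL0.le _
  have hrβ : r ^ (α / 2 - 1) = r ^ (β - 1) * r ^ (α / 2 - β) := by
    rw [← Real.rpow_add hr0, show β - 1 + (α / 2 - β) = α / 2 - 1 by ring]
  have hrL' : r ^ (α / 2 - β) ≤ L ^ (α / 2 - β) :=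
    Real.rpow_le_rpow hr hrL (by linarith)
  have hkey : r ^ (α / 2 - 1) ≤ r ^ (β - 1) * L ^ (α / 2 - β) := by
    rw [hrβ]
    exact mul_le_mul_of_nonneg_left hrL' (Real.rpow_nonneg hr _)
  rcases le_or_gt r δx with hcase | hcase
  · -- r ≤ δx, use first term
    have hδx0 : 0 < δx := lt_of_lt_of_le hr0 hcase
    have h2a : (2:ℝ) ^ ((α - 1) / 2) ≤ 2 := by
      calc (2:ℝ) ^ ((α - 1) / 2) ≤ (2:ℝ) ^ (1:ℝ) :=
          Real.rpow_le_rpow_of_exponent_le (by norm_num) (by linarith)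
        _ = 2 := Real.rpow_one 2
    calc min ((δx * δw) ^ ((α - 1) / 2)) ((δx * δw) ^ (α / 2) / r)
        ≤ (δx * δw) ^ ((α - 1) / 2) := min_le_left _ _
      _ ≤ (2 * (δx * δx)) ^ ((α - 1) / 2) := by
          apply Real.rpow_le_rpow (mul_nonneg hδx hδw) (by nlinarith) (by linarith)
      _ = 2 ^ ((α - 1) / 2) * (δx ^ ((α - 1) / 2) * δx ^ ((α - 1) / 2)) := by
          rw [Real.mul_rpow (by norm_num) (mul_nonneg hδx hδx),
            Real.mul_rpow hδx hδx]
      _ = 2 ^ ((α - 1) / 2) * (δx ^ (α / 2) * δx ^ (α / 2 - 1)) := by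
          rw [← Real.rpow_add hδx0, ← Real.rpow_add hδx0,
            show (α - 1) / 2 + (α - 1) / 2 = α / 2 + (α / 2 - 1) by ring]
      _ ≤ 2 * (δx ^ (α / 2) * r ^ (α / 2 - 1)) := by
          apply mul_le_mul h2a _ _ (by norm_num)
          · apply mul_le_mul_of_nonneg_left _ (Real.rpow_nonneg hδx _)
            exact Real.rpow_le_rpow_of_nonpos hr0 hcase (by linarith)
          · exact mul_nonneg (Real.rpow_nonneg hδx _) (Real.rpow_nonneg hδx _)
      _ ≤ 2 * (δx ^ (α / 2) * (r ^ (β - 1) * L ^ (α / 2 - β))) := by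
          apply mul_le_mul_of_nonneg_left _ (by norm_num)
          exact mul_le_mul_of_nonneg_left hkey (Real.rpow_nonneg hδx _)
      _ = 2 * L ^ (α / 2 - β) * (δx ^ (α / 2) * r ^ (β - 1)) := by ring
  · -- δx < r, use second term
    have h2a : (2:ℝ) ^ (α / 2) ≤ 2 := by
      calc (2:ℝ) ^ (α / 2) ≤ (2:ℝ) ^ (1:ℝ) :=
          Real.rpow_le_rpow_of_exponent_le (by norm_num) (by linarith)
        _ = 2 := Real.rpow_one 2
    calc min ((δx * δw) ^ ((α - 1) / 2)) ((δx * δw) ^ (α / 2) / r)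
        ≤ (δx * δw) ^ (α / 2) / r := min_le_right _ _
      _ ≤ (2 * (δx * r)) ^ (α / 2) / r := by
          refine (div_le_div_iff_of_pos_right hr0).2 ?_
          apply Real.rpow_le_rpow (mul_nonneg hδx hδw) (by nlinarith) (by linarith)
      _ = 2 ^ (α / 2) * δx ^ (α / 2) * (r ^ (α / 2) / r) := by
          rw [Real.mul_rpow (by norm_num) (mul_nonneg hδx hr),
            Real.mul_rpow hδx hr]
          ring
      _ = 2 ^ (α / 2) * δx ^ (α / 2) * r ^ (α / 2 - 1) := by
          rw [Real.rpow_sub_one hr0.ne']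
      _ ≤ 2 * δx ^ (α / 2) * r ^ (α / 2 - 1) := by
          apply mul_le_mul_of_nonneg_right _ (Real.rpow_nonneg hr _)
          exact mul_le_mul_of_nonneg_right h2a (Real.rpow_nonneg hδx _)
      _ ≤ 2 * δx ^ (α / 2) * (r ^ (β - 1) * L ^ (α / 2 - β)) := by
          apply mul_le_mul_of_nonneg_left hkey
          exact mul_nonneg (by norm_num) (Real.rpow_nonneg hδx _)
      _ = 2 * L ^ (α / 2 - β) * (δx ^ (α / 2) * r ^ (β - 1)) := by ring

/-- One-dimensional Green-function-type integral estimate: for a bounded open interval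
`D = (p, q)`, `1 < α < 2`, `0 < ϱ < 1`, with `δ_D(x) = dist(x, Dᶜ)` and
`K(x,w) = min{(δ_D(x)δ_D(w))^{(α-1)/2}, (δ_D(x)δ_D(w))^{α/2}/|x-w|}`, there is a
constant `C = C(α, ϱ, diam D)` such that for all `x ≠ y` in `D`,
`∫_D K(x,w) |w-y|^{ϱ-1} dw ≤ C δ_D(x)^{α/2} |x-y|^{ϱ-1}`. -/
theorem one_dim_green_kernel_estimate (p q : ℝ) (hpq : p < q)
    (α ϱ : ℝ) (hα1 : 1 < α) (hα2 : α < 2) (hϱ1 : 0 < ϱ) (hϱ2 : ϱ < 1) :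
    ∃ C : ℝ, 0 < C ∧
      ∀ x ∈ Set.Ioo p q, ∀ y ∈ Set.Ioo p q, x ≠ y →
        (∫⁻ w in Set.Ioo p q,
          ENNReal.ofReal
            (min ((Metric.infDist x (Set.Ioo p q)ᶜ *
                    Metric.infDist w (Set.Ioo p q)ᶜ) ^ ((α - 1) / 2))
                ((Metric.infDist x (Set.Ioo p q)ᶜ *
                    Metric.infDist w (Set.Ioo p q)ᶜ) ^ (α / 2) / |x - w|) *
              |w - y| ^ (ϱ - 1))) ≤
          ENNReal.ofReal
            (C * Metric.infDist x (Set.Ioo p q)ᶜ ^ (α / 2) * |x - y| ^ (ϱ - 1)) := by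
  set L : ℝ := q - p with hLdef
  have hL0 : 0 < L := sub_pos.2 hpq
  set β : ℝ := (1 - ϱ) / 2 with hβdef
  have hβ0 : 0 < β := by rw [hβdef]; linarith
  have hβα : β ≤ α / 2 := by rw [hβdef]; linarith
  have hsum : β + ϱ < 1 := by rw [hβdef]; linarith
  set C1 : ℝ := 2 * L ^ (α / 2 - β) with hC1def
  set C2 : ℝ := L ^ β * (4 / β + 4 / ϱ + 12 / (1 - β - ϱ)) with hC2def
  have hC1 : 0 < C1 := by
    rw [hC1def]; positivity
  have hC2 : 0 < C2 := by
    rw [hC2def]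
    apply mul_pos (Real.rpow_pos_of_pos hL0 _)
    have h1 : (0:ℝ) < 1 - β - ϱ := by linarith
    have : (0:ℝ) < 4 / β := by positivity
    have : (0:ℝ) < 4 / ϱ := by positivity
    have : (0:ℝ) < 12 / (1 - β - ϱ) := by positivity
    linarith
  refine ⟨C1 * C2, mul_pos hC1 hC2, fun x hx y hy hxy => ?_⟩
  set δ : ℝ → ℝ := fun z => Metric.infDist z (Set.Ioo p q)ᶜ with hδdef
  have hδnn : ∀ z, 0 ≤ δ z := fun z => Metric.infDist_nonneg
  have hpmem : p ∈ (Set.Ioo p q)ᶜ := fun h => lt_irrefl p h.1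
  have hδxL : δ x ≤ L := by
    calc δ x ≤ dist x p := Metric.infDist_le_dist_of_mem hpmem
      _ = |x - p| := Real.dist_eq x p
      _ = x - p := abs_of_pos (sub_pos.2 hx.1)
      _ ≤ L := by rw [hLdef]; linarith [hx.2]
  -- pointwise bound
  have ptwise : ∀ w ∈ Set.Ioo p q,
      ENNReal.ofReal (min ((δ x * δ w) ^ ((α - 1) / 2)) ((δ x * δ w) ^ (α / 2) / |x - w|)
          * |w - y| ^ (ϱ - 1))
        ≤ ENNReal.ofReal ((C1 * δ x ^ (α / 2)) * (|x - w| ^ (β - 1) * |w - y| ^ (ϱ - 1))) := by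
    intro w hw
    refine ENNReal.ofReal_le_ofReal ?_
    have hδwx : δ w ≤ δ x + |x - w| := by
      calc δ w ≤ δ x + dist w x := Metric.infDist_le_infDist_add_dist
        _ = δ x + |x - w| := by rw [Real.dist_eq, abs_sub_comm]
    have hrL : |x - w| ≤ L := by
      rw [abs_sub_le_iff]
      constructor <;> [linarith [hx.1, hx.2, hw.1, hw.2]; linarith [hx.1, hx.2, hw.1, hw.2]]
    have hk := kernel_ptwise L (δ x) (δ w) |x - w| α β hL0 (hδnn x) (hδnn w)
      (abs_nonneg _) hrL hδwx hα1 hα2 hβ0 hβα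
    calc min ((δ x * δ w) ^ ((α - 1) / 2)) ((δ x * δ w) ^ (α / 2) / |x - w|)
          * |w - y| ^ (ϱ - 1)
        ≤ (2 * L ^ (α / 2 - β) * (δ x ^ (α / 2) * |x - w| ^ (β - 1)))
            * |w - y| ^ (ϱ - 1) :=
          mul_le_mul_of_nonneg_right hk (Real.rpow_nonneg (abs_nonneg _) _)
      _ = (C1 * δ x ^ (α / 2)) * (|x - w| ^ (β - 1) * |w - y| ^ (ϱ - 1)) := by
          rw [hC1def]; ring
  have hconst_nn : (0:ℝ) ≤ C1 * δ x ^ (α / 2) :=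
    mul_nonneg hC1.le (Real.rpow_nonneg (hδnn x) _)
  calc ∫⁻ w in Set.Ioo p q,
        ENNReal.ofReal (min ((δ x * δ w) ^ ((α - 1) / 2)) ((δ x * δ w) ^ (α / 2) / |x - w|)
          * |w - y| ^ (ϱ - 1))
      ≤ ∫⁻ w in Set.Ioo p q,
          ENNReal.ofReal ((C1 * δ x ^ (α / 2)) * (|x - w| ^ (β - 1) * |w - y| ^ (ϱ - 1))) :=
        setLIntegral_mono' measurableSet_Ioo ptwise
    _ = ∫⁻ w in Set.Ioo p q,
          ENNReal.ofReal (C1 * δ x ^ (α / 2))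
            * ENNReal.ofReal (|x - w| ^ (β - 1) * |w - y| ^ (ϱ - 1)) := by
        simp_rw [ENNReal.ofReal_mul hconst_nn]
    _ = ENNReal.ofReal (C1 * δ x ^ (α / 2))
          * ∫⁻ w in Set.Ioo p q, ENNReal.ofReal (|x - w| ^ (β - 1) * |w - y| ^ (ϱ - 1)) :=
        lintegral_const_mul' _ _ ENNReal.ofReal_ne_top
    _ ≤ ENNReal.ofReal (C1 * δ x ^ (α / 2)) * ENNReal.ofReal (C2 * |x - y| ^ (ϱ - 1)) := by
        refine mul_le_mul_right ?_ _
        have := conv_est p q x y β ϱ hpq hx hy hxy hβ0 hϱ1 hϱ2 hsum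
        rw [hC2def]
        rw [mul_assoc] at this ⊢
        exact this
    _ ≤ ENNReal.ofReal (C1 * C2 * δ x ^ (α / 2) * |x - y| ^ (ϱ - 1)) := by
        rw [← ENNReal.ofReal_mul hconst_nn]
        exact ENNReal.ofReal_le_ofReal (le_of_eq (by ring))
end

section
/- Let D ⊂ ℝ be a nonempty bounded open interval, let 1 < α < 2 and ϱ > 0. For x, w ∈ D set K(x,w) = min{ (δ_D(x) δ_D(w))^{(α−1)/2}, (δ_D(x) δ_D(w))^{α/2} / |x−w| }. Let σ: ℝ → [0,∞) be measurable with σ(w) ≤ c |w|^{ϱ−1} for all w with 0 < |w| ≤ diam(D). Then there exists a constant C = C(α, ϱ, c, diam(D)) such that for all x, y ∈ D with x ≠ y: ∫_D ∫_D K(x,w) σ(w−z) K(z,y) dw dz ≤ C (δ_D(x) δ_D(y))^{α/2} |x−y|^{(ϱ∧1)−1}. -/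
open MeasureTheory Set

lemma lint_right (u R cc : ℝ) (hR : 0 < R) (hc : -1 < cc) :
    ∫⁻ w in Set.Ioo u (u + R), ENNReal.ofReal (|w - u| ^ cc)
      = ENNReal.ofReal (R ^ (cc + 1) / (cc + 1)) := by
  have h1 : ∫⁻ w in Set.Ioo u (u + R), ENNReal.ofReal (|w - u| ^ cc)
      = ∫⁻ w in Set.Ioo u (u + R), ENNReal.ofReal ((w - u) ^ cc) := by
    refine setLIntegral_congr_fun measurableSet_Ioo (fun w hw => ?_)
    rw [abs_of_pos (sub_pos.mpr hw.1)]
  have hii : IntervalIntegrable (fun w => (w - u) ^ cc) volume u (u + R) := by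
    have := (intervalIntegral.intervalIntegrable_rpow' (a := 0) (b := R) hc).comp_sub_right u
    simpa [add_comm] using this
  have hint : IntegrableOn (fun w => (w - u) ^ cc) (Set.Ioo u (u + R)) volume :=
    hii.1.mono_set Set.Ioo_subset_Ioc_self
  have hnn : 0 ≤ᵐ[volume.restrict (Set.Ioo u (u + R))] fun w => (w - u) ^ cc := by
    filter_upwards [self_mem_ae_restrict measurableSet_Ioo] with w hw
    exact Real.rpow_nonneg (by linarith [hw.1]) _
  rw [h1, ← ofReal_integral_eq_lintegral_ofReal hint hnn]
  congr 1
  have h2 : ∫ w in Set.Ioo u (u + R), (w - u) ^ cc = ∫ w in u..(u + R), (w - u) ^ cc := by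
    rw [intervalIntegral.integral_of_le (by linarith), integral_Ioc_eq_integral_Ioo]
  rw [h2, intervalIntegral.integral_comp_sub_right (fun t => t ^ cc) u]
  simp only [sub_self, add_sub_cancel_left]
  rw [integral_rpow (Or.inl hc), Real.zero_rpow (by linarith : cc + 1 ≠ 0)]
  ring

lemma lint_left (u R cc : ℝ) (hR : 0 < R) (hc : -1 < cc) :
    ∫⁻ w in Set.Ioo (u - R) u, ENNReal.ofReal (|w - u| ^ cc)
      = ENNReal.ofReal (R ^ (cc + 1) / (cc + 1)) := by
  have h1 : ∫⁻ w in Set.Ioo (u - R) u, ENNReal.ofReal (|w - u| ^ cc)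
      = ∫⁻ w in Set.Ioo (u - R) u, ENNReal.ofReal ((u - w) ^ cc) := by
    refine setLIntegral_congr_fun measurableSet_Ioo (fun w hw => ?_)
    rw [abs_sub_comm, abs_of_pos (sub_pos.mpr hw.2)]
  have hii : IntervalIntegrable (fun w => (u - w) ^ cc) volume (u - R) u := by
    have := ((intervalIntegral.intervalIntegrable_rpow' (a := 0) (b := R) hc).comp_sub_left u).symm
    simpa using this
  have hint : IntegrableOn (fun w => (u - w) ^ cc) (Set.Ioo (u - R) u) volume :=
    hii.1.mono_set Set.Ioo_subset_Ioc_self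
  have hnn : 0 ≤ᵐ[volume.restrict (Set.Ioo (u - R) u)] fun w => (u - w) ^ cc := by
    filter_upwards [self_mem_ae_restrict measurableSet_Ioo] with w hw
    exact Real.rpow_nonneg (by linarith [hw.2]) _
  rw [h1, ← ofReal_integral_eq_lintegral_ofReal hint hnn]
  congr 1
  have h2 : ∫ w in Set.Ioo (u - R) u, (u - w) ^ cc = ∫ w in (u - R)..u, (u - w) ^ cc := by
    rw [intervalIntegral.integral_of_le (by linarith), integral_Ioc_eq_integral_Ioo]
  rw [h2, intervalIntegral.integral_comp_sub_left (fun t => t ^ cc) u]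
  simp only [sub_self, sub_sub_cancel]
  rw [integral_rpow (Or.inl hc), Real.zero_rpow (by linarith : cc + 1 ≠ 0)]
  ring

lemma lint_ball (u R cc : ℝ) (hR : 0 < R) (hc : -1 < cc) :
    ∫⁻ w in {w : ℝ | |w - u| ≤ R}, ENNReal.ofReal (|w - u| ^ cc)
      ≤ ENNReal.ofReal (2 / (cc + 1) * R ^ (cc + 1)) := by
  have hsub : {w : ℝ | |w - u| ≤ R} ⊆ Set.Icc (u - R) u ∪ Set.Icc u (u + R) := by
    intro w hw
    rw [Set.mem_setOf_eq, abs_le] at hw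
    rcases le_total w u with h | h
    · exact Or.inl ⟨by linarith [hw.1], h⟩
    · exact Or.inr ⟨h, by linarith [hw.2]⟩
  calc ∫⁻ w in {w : ℝ | |w - u| ≤ R}, ENNReal.ofReal (|w - u| ^ cc)
      ≤ ∫⁻ w in Set.Icc (u - R) u ∪ Set.Icc u (u + R), ENNReal.ofReal (|w - u| ^ cc) :=
        lintegral_mono_set hsub
    _ ≤ (∫⁻ w in Set.Icc (u - R) u, ENNReal.ofReal (|w - u| ^ cc))
        + ∫⁻ w in Set.Icc u (u + R), ENNReal.ofReal (|w - u| ^ cc) := lintegral_union_le _ _ _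
    _ = (∫⁻ w in Set.Ioo (u - R) u, ENNReal.ofReal (|w - u| ^ cc))
        + ∫⁻ w in Set.Ioo u (u + R), ENNReal.ofReal (|w - u| ^ cc) := by
        rw [setLIntegral_congr (Ioo_ae_eq_Icc (μ := volume) (a := u - R) (b := u)),
          setLIntegral_congr (Ioo_ae_eq_Icc (μ := volume) (a := u) (b := u + R))]
    _ = ENNReal.ofReal (R ^ (cc + 1) / (cc + 1)) + ENNReal.ofReal (R ^ (cc + 1) / (cc + 1)) := by
        rw [lint_left u R cc hR hc, lint_right u R cc hR hc]
    _ = ENNReal.ofReal (2 / (cc + 1) * R ^ (cc + 1)) := by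
        rw [← ENNReal.ofReal_add (div_nonneg (Real.rpow_nonneg hR.le _) (by linarith)) (div_nonneg (Real.rpow_nonneg hR.le _) (by linarith))]
        congr 1; ring

lemma lint_seg (u a b dd : ℝ) (h0 : 0 < a) (hab : a ≤ b) (hd : dd < -1) :
    ∫⁻ w in Set.Icc (u + a) (u + b), ENNReal.ofReal (|w - u| ^ dd)
      ≤ ENNReal.ofReal (a ^ (dd + 1) / (-(dd + 1))) := by
  rw [← setLIntegral_congr (Ioo_ae_eq_Icc (μ := volume) (a := u + a) (b := u + b))]
  have h1 : ∫⁻ w in Set.Ioo (u + a) (u + b), ENNReal.ofReal (|w - u| ^ dd)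
      = ∫⁻ w in Set.Ioo (u + a) (u + b), ENNReal.ofReal ((w - u) ^ dd) := by
    refine setLIntegral_congr_fun measurableSet_Ioo (fun w hw => ?_)
    rw [abs_of_pos (by linarith [hw.1])]
  have hii : IntervalIntegrable (fun w => (w - u) ^ dd) volume (u + a) (u + b) := by
    have h0' : (0:ℝ) ∉ Set.uIcc a b := by
      rw [Set.uIcc_of_le hab]; intro h; exact absurd h.1 (by linarith)
    have := (intervalIntegral.intervalIntegrable_rpow (μ := volume) (r := dd) (Or.inr h0')).comp_sub_right u
    simpa [add_comm] using this
  have hint : IntegrableOn (fun w => (w - u) ^ dd) (Set.Ioo (u + a) (u + b)) volume :=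
    hii.1.mono_set Set.Ioo_subset_Ioc_self
  have hnn : 0 ≤ᵐ[volume.restrict (Set.Ioo (u + a) (u + b))] fun w => (w - u) ^ dd := by
    filter_upwards [self_mem_ae_restrict measurableSet_Ioo] with w hw
    exact Real.rpow_nonneg (by linarith [hw.1]) _
  rw [h1, ← ofReal_integral_eq_lintegral_ofReal hint hnn]
  apply ENNReal.ofReal_le_ofReal
  have h2 : ∫ w in Set.Ioo (u + a) (u + b), (w - u) ^ dd
      = ∫ w in (u + a)..(u + b), (w - u) ^ dd := by
    rw [intervalIntegral.integral_of_le (by linarith), integral_Ioc_eq_integral_Ioo]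
  rw [h2, intervalIntegral.integral_comp_sub_right (fun t => t ^ dd) u]
  simp only [add_sub_cancel_left]
  have h0'' : (0:ℝ) ∉ Set.uIcc a b := by
    rw [Set.uIcc_of_le hab]; intro h; exact absurd h.1 (by linarith)
  rw [integral_rpow (Or.inr ⟨by linarith, h0''⟩)]
  have hbnn : 0 ≤ b ^ (dd + 1) := Real.rpow_nonneg (by linarith) _
  have e1 : (b ^ (dd + 1) - a ^ (dd + 1)) / (dd + 1)
      = (a ^ (dd + 1) - b ^ (dd + 1)) / (-(dd + 1)) := by
    rw [div_neg, ← neg_div, neg_sub]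
  rw [e1]
  have hs : (0:ℝ) < -(dd + 1) := by linarith
  exact (div_le_div_iff_of_pos_right hs).mpr (by nlinarith)

lemma lint_seg_left (u a b dd : ℝ) (h0 : 0 < a) (hab : a ≤ b) (hd : dd < -1) :
    ∫⁻ w in Set.Icc (u - b) (u - a), ENNReal.ofReal (|w - u| ^ dd)
      ≤ ENNReal.ofReal (a ^ (dd + 1) / (-(dd + 1))) := by
  rw [← setLIntegral_congr (Ioo_ae_eq_Icc (μ := volume) (a := u - b) (b := u - a))]
  have h1 : ∫⁻ w in Set.Ioo (u - b) (u - a), ENNReal.ofReal (|w - u| ^ dd)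
      = ∫⁻ w in Set.Ioo (u - b) (u - a), ENNReal.ofReal ((u - w) ^ dd) := by
    refine setLIntegral_congr_fun measurableSet_Ioo (fun w hw => ?_)
    rw [abs_sub_comm, abs_of_pos (by linarith [hw.2])]
  have h0' : (0:ℝ) ∉ Set.uIcc a b := by
    rw [Set.uIcc_of_le hab]; intro h; exact absurd h.1 (by linarith)
  have hii : IntervalIntegrable (fun w => (u - w) ^ dd) volume (u - b) (u - a) := by
    have := (intervalIntegral.intervalIntegrable_rpow (μ := volume) (r := dd)
      (Or.inr h0')).comp_sub_left u
    simpa using this.symm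
  have hint : IntegrableOn (fun w => (u - w) ^ dd) (Set.Ioo (u - b) (u - a)) volume :=
    hii.1.mono_set Set.Ioo_subset_Ioc_self
  have hnn : 0 ≤ᵐ[volume.restrict (Set.Ioo (u - b) (u - a))] fun w => (u - w) ^ dd := by
    filter_upwards [self_mem_ae_restrict measurableSet_Ioo] with w hw
    exact Real.rpow_nonneg (by linarith [hw.2]) _
  rw [h1, ← ofReal_integral_eq_lintegral_ofReal hint hnn]
  apply ENNReal.ofReal_le_ofReal
  have h2 : ∫ w in Set.Ioo (u - b) (u - a), (u - w) ^ dd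
      = ∫ w in (u - b)..(u - a), (u - w) ^ dd := by
    rw [intervalIntegral.integral_of_le (by linarith), integral_Ioc_eq_integral_Ioo]
  rw [h2, intervalIntegral.integral_comp_sub_left (fun t => t ^ dd) u]
  simp only [sub_sub_cancel]
  rw [integral_rpow (Or.inr ⟨by linarith, h0'⟩)]
  have hbnn : 0 ≤ b ^ (dd + 1) := Real.rpow_nonneg (by linarith) _
  have e1 : (b ^ (dd + 1) - a ^ (dd + 1)) / (dd + 1)
      = (a ^ (dd + 1) - b ^ (dd + 1)) / (-(dd + 1)) := by
    rw [div_neg, ← neg_div, neg_sub]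
  rw [e1]
  have hs : (0:ℝ) < -(dd + 1) := by linarith
  exact (div_le_div_iff_of_pos_right hs).mpr (by nlinarith)

lemma lint_annulus (u R M dd : ℝ) (hR : 0 < R) (hRM : R ≤ M) (hd : dd < -1) :
    ∫⁻ w in {w : ℝ | R ≤ |w - u| ∧ |w - u| ≤ M}, ENNReal.ofReal (|w - u| ^ dd)
      ≤ ENNReal.ofReal (2 * (R ^ (dd + 1) / (-(dd + 1)))) := by
  have hsub : {w : ℝ | R ≤ |w - u| ∧ |w - u| ≤ M}
      ⊆ Set.Icc (u - M) (u - R) ∪ Set.Icc (u + R) (u + M) := by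
    intro w hw
    obtain ⟨h1, h2⟩ := hw
    rw [abs_le] at h2
    rcases abs_cases (w - u) with ⟨he, _⟩ | ⟨he, _⟩
    · exact Or.inr ⟨by rw [he] at h1; linarith, by linarith [h2.2]⟩
    · exact Or.inl ⟨by linarith [h2.1], by rw [he] at h1; linarith⟩
  calc ∫⁻ w in {w : ℝ | R ≤ |w - u| ∧ |w - u| ≤ M}, ENNReal.ofReal (|w - u| ^ dd)
      ≤ ∫⁻ w in Set.Icc (u - M) (u - R) ∪ Set.Icc (u + R) (u + M),
          ENNReal.ofReal (|w - u| ^ dd) := lintegral_mono_set hsub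
    _ ≤ (∫⁻ w in Set.Icc (u - M) (u - R), ENNReal.ofReal (|w - u| ^ dd))
        + ∫⁻ w in Set.Icc (u + R) (u + M), ENNReal.ofReal (|w - u| ^ dd) :=
        lintegral_union_le _ _ _
    _ ≤ ENNReal.ofReal (R ^ (dd + 1) / (-(dd + 1)))
        + ENNReal.ofReal (R ^ (dd + 1) / (-(dd + 1))) :=
        add_le_add (lint_seg_left u R M dd hR hRM hd) (lint_seg u R M dd hR hRM hd)
    _ = ENNReal.ofReal (2 * (R ^ (dd + 1) / (-(dd + 1)))) := by
        rw [← ENNReal.ofReal_add (div_nonneg (Real.rpow_nonneg hR.le _) (by linarith))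
          (div_nonneg (Real.rpow_nonneg hR.le _) (by linarith))]
        congr 1; ring

lemma prod_rpow_le (s t a b : ℝ) (hs : 0 < s) (ht : 0 < t) (ha : a ≤ 0) (hb : b ≤ 0) :
    s ^ a * t ^ b ≤ s ^ (a + b) + t ^ (a + b) := by
  rcases le_total s t with h | h
  · have h1 : t ^ b ≤ s ^ b := Real.rpow_le_rpow_of_nonpos hs h hb
    calc s ^ a * t ^ b ≤ s ^ a * s ^ b :=
          mul_le_mul_of_nonneg_left h1 (Real.rpow_nonneg hs.le a)
      _ = s ^ (a + b) := (Real.rpow_add hs a b).symm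
      _ ≤ s ^ (a + b) + t ^ (a + b) := le_add_of_nonneg_right (Real.rpow_nonneg ht.le _)
  · have h1 : s ^ a ≤ t ^ a := Real.rpow_le_rpow_of_nonpos ht h ha
    calc s ^ a * t ^ b ≤ t ^ a * t ^ b :=
          mul_le_mul_of_nonneg_right h1 (Real.rpow_nonneg ht.le b)
      _ = t ^ (a + b) := (Real.rpow_add ht a b).symm
      _ ≤ s ^ (a + b) + t ^ (a + b) := le_add_of_nonneg_left (Real.rpow_nonneg hs.le _)

lemma mble_part (u : ℝ) (e : ℝ) :
    Measurable fun w : ℝ => ENNReal.ofReal (|w - u| ^ e) :=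
  (((measurable_id.sub_const u).abs).pow measurable_const).ennreal_ofReal

lemma conv_bounded (p q u v a b : ℝ) (hpq : p < q) (hu : u ∈ Set.Icc p q)
    (hv : v ∈ Set.Icc p q) (ha0 : a < 0) (hb0 : b < 0) (hab : -1 < a + b) :
    ∫⁻ w in Set.Ioo p q, ENNReal.ofReal (|w - u| ^ a * |w - v| ^ b)
      ≤ ENNReal.ofReal (4 / (a + b + 1) * (q - p) ^ (a + b + 1)) := by
  have hL : 0 < q - p := sub_pos.mpr hpq
  have hstep : ∀ᵐ w ∂(volume.restrict (Set.Ioo p q)),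
      ENNReal.ofReal (|w - u| ^ a * |w - v| ^ b)
        ≤ ENNReal.ofReal (|w - u| ^ (a + b)) + ENNReal.ofReal (|w - v| ^ (a + b)) := by
    have hnull : ∀ᵐ w : ℝ, w ∉ ({u, v} : Set ℝ) :=
      measure_eq_zero_iff_ae_notMem.mp ((((Set.finite_singleton v).insert u).measure_zero _))
    filter_upwards [ae_restrict_of_ae hnull] with w hw
    have hwu : 0 < |w - u| := abs_pos.mpr (sub_ne_zero.mpr fun h => hw (by simp [h]))
    have hwv : 0 < |w - v| := abs_pos.mpr (sub_ne_zero.mpr fun h => hw (by simp [h]))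
    calc ENNReal.ofReal (|w - u| ^ a * |w - v| ^ b)
        ≤ ENNReal.ofReal (|w - u| ^ (a + b) + |w - v| ^ (a + b)) :=
          ENNReal.ofReal_le_ofReal (prod_rpow_le _ _ _ _ hwu hwv ha0.le hb0.le)
      _ = _ := ENNReal.ofReal_add (Real.rpow_nonneg (abs_nonneg _) _)
          (Real.rpow_nonneg (abs_nonneg _) _)
  have hIu : Set.Ioo p q ⊆ {w : ℝ | |w - u| ≤ q - p} := by
    intro w hw; rw [Set.mem_setOf_eq, abs_le]
    constructor <;> [linarith [hw.1, hu.2]; linarith [hw.2, hu.1]]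
  have hIv : Set.Ioo p q ⊆ {w : ℝ | |w - v| ≤ q - p} := by
    intro w hw; rw [Set.mem_setOf_eq, abs_le]
    constructor <;> [linarith [hw.1, hv.2]; linarith [hw.2, hv.1]]
  calc ∫⁻ w in Set.Ioo p q, ENNReal.ofReal (|w - u| ^ a * |w - v| ^ b)
      ≤ ∫⁻ w in Set.Ioo p q,
          (ENNReal.ofReal (|w - u| ^ (a + b)) + ENNReal.ofReal (|w - v| ^ (a + b))) :=
        lintegral_mono_ae hstep
    _ = (∫⁻ w in Set.Ioo p q, ENNReal.ofReal (|w - u| ^ (a + b)))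
        + ∫⁻ w in Set.Ioo p q, ENNReal.ofReal (|w - v| ^ (a + b)) :=
        lintegral_add_left (mble_part u (a + b)) _
    _ ≤ ENNReal.ofReal (2 / (a + b + 1) * (q - p) ^ (a + b + 1))
        + ENNReal.ofReal (2 / (a + b + 1) * (q - p) ^ (a + b + 1)) :=
        add_le_add
          ((lintegral_mono_set hIu).trans (lint_ball u (q - p) (a + b) hL hab))
          ((lintegral_mono_set hIv).trans (lint_ball v (q - p) (a + b) hL hab))
    _ = ENNReal.ofReal (4 / (a + b + 1) * (q - p) ^ (a + b + 1)) := by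
        have hn : 0 ≤ 2 / (a + b + 1) * (q - p) ^ (a + b + 1) :=
          mul_nonneg (div_nonneg (by norm_num) (by linarith)) (Real.rpow_nonneg hL.le _)
        rw [← ENNReal.ofReal_add hn hn]
        congr 1; ring

lemma conv_singular (p q u v a b : ℝ) (hpq : p < q) (hu : u ∈ Set.Icc p q)
    (hv : v ∈ Set.Icc p q) (huv : u ≠ v) (ha1 : -1 < a) (ha0 : a < 0)
    (hb1 : -1 < b) (hb0 : b < 0) (hab : a + b + 1 < 0) :
    ∫⁻ w in Set.Ioo p q, ENNReal.ofReal (|w - u| ^ a * |w - v| ^ b)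
      ≤ ENNReal.ofReal ((2 / (a + 1) + 2 / (b + 1) + 4 / (-(a + b + 1))) * 2
          * |u - v| ^ (a + b + 1)) := by
  have hL : 0 < q - p := sub_pos.mpr hpq
  set R : ℝ := |u - v| / 2 with hRdef
  have huv0 : 0 < |u - v| := abs_pos.mpr (sub_ne_zero.mpr huv)
  have hR : 0 < R := by positivity
  have huvL : |u - v| ≤ q - p := by
    rw [abs_le]; constructor <;> [linarith [hu.1, hv.2]; linarith [hu.2, hv.1]]
  have hRL : R ≤ q - p := by rw [hRdef]; linarith
  set Bu : Set ℝ := {w : ℝ | |w - u| ≤ R} with hBu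
  set Bv : Set ℝ := {w : ℝ | |w - v| ≤ R} with hBv
  set F : Set ℝ := Set.Ioo p q ∩ (Buᶜ ∩ Bvᶜ) with hF
  have hcover : Set.Ioo p q ⊆ (Bu ∪ Bv) ∪ F := by
    intro w hw
    by_cases h1 : w ∈ Bu
    · exact Or.inl (Or.inl h1)
    by_cases h2 : w ∈ Bv
    · exact Or.inl (Or.inr h2)
    · exact Or.inr ⟨hw, h1, h2⟩
  have hmono : ∫⁻ w in Set.Ioo p q, ENNReal.ofReal (|w - u| ^ a * |w - v| ^ b)
      ≤ ((∫⁻ w in Bu, ENNReal.ofReal (|w - u| ^ a * |w - v| ^ b))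
        + ∫⁻ w in Bv, ENNReal.ofReal (|w - u| ^ a * |w - v| ^ b))
        + ∫⁻ w in F, ENNReal.ofReal (|w - u| ^ a * |w - v| ^ b) :=
    (lintegral_mono_set hcover).trans ((lintegral_union_le _ _ _).trans
      (add_le_add (lintegral_union_le _ _ _) le_rfl))
  -- Bu piece
  have hBupart : ∫⁻ w in Bu, ENNReal.ofReal (|w - u| ^ a * |w - v| ^ b)
      ≤ ENNReal.ofReal (2 / (a + 1) * R ^ (a + b + 1)) := by
    have hptBu : ∀ w ∈ Bu, ENNReal.ofReal (|w - u| ^ a * |w - v| ^ b)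
        ≤ ENNReal.ofReal (R ^ b) * ENNReal.ofReal (|w - u| ^ a) := by
      intro w hw
      rw [← ENNReal.ofReal_mul (Real.rpow_nonneg hR.le b)]
      apply ENNReal.ofReal_le_ofReal
      have hwv : R ≤ |w - v| := by
        have h3 : |u - v| ≤ |w - u| + |w - v| := by
          calc |u - v| ≤ |u - w| + |w - v| := abs_sub_le u w v
            _ = |w - u| + |w - v| := by rw [abs_sub_comm]
        have := hw; rw [hBu, Set.mem_setOf_eq] at this
        have h4 : |u - v| = 2 * R := by rw [hRdef]; ring
        linarith
      have h5 : |w - v| ^ b ≤ R ^ b := Real.rpow_le_rpow_of_nonpos hR hwv hb0.le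
      calc |w - u| ^ a * |w - v| ^ b ≤ |w - u| ^ a * R ^ b :=
            mul_le_mul_of_nonneg_left h5 (Real.rpow_nonneg (abs_nonneg _) _)
        _ = R ^ b * |w - u| ^ a := mul_comm _ _
    calc ∫⁻ w in Bu, ENNReal.ofReal (|w - u| ^ a * |w - v| ^ b)
        ≤ ∫⁻ w in Bu, ENNReal.ofReal (R ^ b) * ENNReal.ofReal (|w - u| ^ a) := by
          apply setLIntegral_mono ((mble_part u a).const_mul _) hptBu
      _ = ENNReal.ofReal (R ^ b) * ∫⁻ w in Bu, ENNReal.ofReal (|w - u| ^ a) :=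
          lintegral_const_mul' _ _ ENNReal.ofReal_ne_top
      _ ≤ ENNReal.ofReal (R ^ b) * ENNReal.ofReal (2 / (a + 1) * R ^ (a + 1)) :=
          mul_le_mul_right (lint_ball u R a hR ha1) _
      _ = ENNReal.ofReal (2 / (a + 1) * R ^ (a + b + 1)) := by
          rw [← ENNReal.ofReal_mul (Real.rpow_nonneg hR.le b)]
          congr 1
          rw [show a + b + 1 = b + (a + 1) by ring, Real.rpow_add hR b (a + 1)]
          exact mul_left_comm _ _ _
  -- Bv piece
  have hBvpart : ∫⁻ w in Bv, ENNReal.ofReal (|w - u| ^ a * |w - v| ^ b)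
      ≤ ENNReal.ofReal (2 / (b + 1) * R ^ (a + b + 1)) := by
    have hptBv : ∀ w ∈ Bv, ENNReal.ofReal (|w - u| ^ a * |w - v| ^ b)
        ≤ ENNReal.ofReal (R ^ a) * ENNReal.ofReal (|w - v| ^ b) := by
      intro w hw
      rw [← ENNReal.ofReal_mul (Real.rpow_nonneg hR.le a)]
      apply ENNReal.ofReal_le_ofReal
      have hwu : R ≤ |w - u| := by
        have h3 : |u - v| ≤ |w - u| + |w - v| := by
          calc |u - v| ≤ |u - w| + |w - v| := abs_sub_le u w v
            _ = |w - u| + |w - v| := by rw [abs_sub_comm]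
        have := hw; rw [hBv, Set.mem_setOf_eq] at this
        have h4 : |u - v| = 2 * R := by rw [hRdef]; ring
        linarith
      have h5 : |w - u| ^ a ≤ R ^ a := Real.rpow_le_rpow_of_nonpos hR hwu ha0.le
      exact mul_le_mul_of_nonneg_right h5 (Real.rpow_nonneg (abs_nonneg _) _)
    calc ∫⁻ w in Bv, ENNReal.ofReal (|w - u| ^ a * |w - v| ^ b)
        ≤ ∫⁻ w in Bv, ENNReal.ofReal (R ^ a) * ENNReal.ofReal (|w - v| ^ b) := by
          apply setLIntegral_mono ((mble_part v b).const_mul _) hptBv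
      _ = ENNReal.ofReal (R ^ a) * ∫⁻ w in Bv, ENNReal.ofReal (|w - v| ^ b) :=
          lintegral_const_mul' _ _ ENNReal.ofReal_ne_top
      _ ≤ ENNReal.ofReal (R ^ a) * ENNReal.ofReal (2 / (b + 1) * R ^ (b + 1)) :=
          mul_le_mul_right (lint_ball v R b hR hb1) _
      _ = ENNReal.ofReal (2 / (b + 1) * R ^ (a + b + 1)) := by
          rw [← ENNReal.ofReal_mul (Real.rpow_nonneg hR.le a)]
          congr 1
          rw [show a + b + 1 = a + (b + 1) by ring, Real.rpow_add hR a (b + 1)]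
          exact mul_left_comm _ _ _
  -- F piece
  have hFpart : ∫⁻ w in F, ENNReal.ofReal (|w - u| ^ a * |w - v| ^ b)
      ≤ ENNReal.ofReal (2 * (R ^ (a + b + 1) / (-(a + b + 1))))
        + ENNReal.ofReal (2 * (R ^ (a + b + 1) / (-(a + b + 1)))) := by
    have hptF : ∀ w ∈ F, ENNReal.ofReal (|w - u| ^ a * |w - v| ^ b)
        ≤ ENNReal.ofReal (|w - u| ^ (a + b)) + ENNReal.ofReal (|w - v| ^ (a + b)) := by
      intro w hw
      obtain ⟨hw1, hw2, hw3⟩ := hw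
      rw [hBu, Set.mem_compl_iff, Set.mem_setOf_eq, not_le] at hw2
      rw [hBv, Set.mem_compl_iff, Set.mem_setOf_eq, not_le] at hw3
      calc ENNReal.ofReal (|w - u| ^ a * |w - v| ^ b)
          ≤ ENNReal.ofReal (|w - u| ^ (a + b) + |w - v| ^ (a + b)) :=
            ENNReal.ofReal_le_ofReal
              (prod_rpow_le _ _ _ _ (hR.trans hw2) (hR.trans hw3) ha0.le hb0.le)
        _ = _ := ENNReal.ofReal_add (Real.rpow_nonneg (abs_nonneg _) _)
            (Real.rpow_nonneg (abs_nonneg _) _)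
    have hFu : F ⊆ {w : ℝ | R ≤ |w - u| ∧ |w - u| ≤ q - p} := by
      intro w hw
      obtain ⟨hw1, hw2, _⟩ := hw
      rw [hBu, Set.mem_compl_iff, Set.mem_setOf_eq, not_le] at hw2
      refine ⟨hw2.le, ?_⟩
      rw [abs_le]; constructor <;> [linarith [hw1.1, hu.2]; linarith [hw1.2, hu.1]]
    have hFv : F ⊆ {w : ℝ | R ≤ |w - v| ∧ |w - v| ≤ q - p} := by
      intro w hw
      obtain ⟨hw1, _, hw3⟩ := hw
      rw [hBv, Set.mem_compl_iff, Set.mem_setOf_eq, not_le] at hw3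
      refine ⟨hw3.le, ?_⟩
      rw [abs_le]; constructor <;> [linarith [hw1.1, hv.2]; linarith [hw1.2, hv.1]]
    calc ∫⁻ w in F, ENNReal.ofReal (|w - u| ^ a * |w - v| ^ b)
        ≤ ∫⁻ w in F,
            (ENNReal.ofReal (|w - u| ^ (a + b)) + ENNReal.ofReal (|w - v| ^ (a + b))) :=
          setLIntegral_mono ((mble_part u (a + b)).add (mble_part v (a + b))) hptF
      _ = (∫⁻ w in F, ENNReal.ofReal (|w - u| ^ (a + b)))
          + ∫⁻ w in F, ENNReal.ofReal (|w - v| ^ (a + b)) :=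
          lintegral_add_left (mble_part u (a + b)) _
      _ ≤ ENNReal.ofReal (2 * (R ^ (a + b + 1) / (-(a + b + 1))))
          + ENNReal.ofReal (2 * (R ^ (a + b + 1) / (-(a + b + 1)))) :=
          add_le_add
            ((lintegral_mono_set hFu).trans
              (lint_annulus u R (q - p) (a + b) hR hRL (by linarith)))
            ((lintegral_mono_set hFv).trans
              (lint_annulus v R (q - p) (a + b) hR hRL (by linarith)))
  -- combine
  have habs : 0 < -(a + b + 1) := by linarith
  have hRs : R ^ (a + b + 1) ≤ 2 * |u - v| ^ (a + b + 1) := by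
    have h1 : R ^ (a + b + 1) = |u - v| ^ (a + b + 1) / 2 ^ (a + b + 1) := by
      rw [hRdef, Real.div_rpow (abs_nonneg _) (by norm_num)]
    have h2 : (1 : ℝ) / 2 ≤ 2 ^ (a + b + 1) := by
      have := Real.rpow_le_rpow_of_exponent_le (x := 2) (by norm_num) (by linarith : (-1:ℝ) ≤ a + b + 1)
      rwa [Real.rpow_neg_one, show ((2:ℝ))⁻¹ = 1/2 by norm_num] at this
    rw [h1, div_le_iff₀ (by positivity)]
    have h3 : 0 ≤ |u - v| ^ (a + b + 1) := Real.rpow_nonneg (abs_nonneg _) _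
    nlinarith
  have n1 : 0 ≤ 2 / (a + 1) * R ^ (a + b + 1) :=
    mul_nonneg (div_nonneg (by norm_num) (by linarith)) (Real.rpow_nonneg hR.le _)
  have n2 : 0 ≤ 2 / (b + 1) * R ^ (a + b + 1) :=
    mul_nonneg (div_nonneg (by norm_num) (by linarith)) (Real.rpow_nonneg hR.le _)
  have n3 : 0 ≤ 2 * (R ^ (a + b + 1) / (-(a + b + 1))) :=
    mul_nonneg (by norm_num) (div_nonneg (Real.rpow_nonneg hR.le _) habs.le)
  calc ∫⁻ w in Set.Ioo p q, ENNReal.ofReal (|w - u| ^ a * |w - v| ^ b)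
      ≤ ((ENNReal.ofReal (2 / (a + 1) * R ^ (a + b + 1)))
        + ENNReal.ofReal (2 / (b + 1) * R ^ (a + b + 1)))
        + (ENNReal.ofReal (2 * (R ^ (a + b + 1) / (-(a + b + 1))))
          + ENNReal.ofReal (2 * (R ^ (a + b + 1) / (-(a + b + 1))))) :=
      hmono.trans (add_le_add (add_le_add hBupart hBvpart) hFpart)
    _ = ENNReal.ofReal ((2 / (a + 1) + 2 / (b + 1) + 4 / (-(a + b + 1))) * R ^ (a + b + 1)) := by
      rw [← ENNReal.ofReal_add n1 n2, ← ENNReal.ofReal_add n3 n3,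
        ← ENNReal.ofReal_add (add_nonneg n1 n2) (add_nonneg n3 n3)]
      congr 1
      have hne : -(a + b + 1) ≠ 0 := ne_of_gt habs
      field_simp
      ring
    _ ≤ ENNReal.ofReal ((2 / (a + 1) + 2 / (b + 1) + 4 / (-(a + b + 1))) * 2
          * |u - v| ^ (a + b + 1)) := by
      apply ENNReal.ofReal_le_ofReal
      have hcoef : 0 ≤ 2 / (a + 1) + 2 / (b + 1) + 4 / (-(a + b + 1)) :=
        add_nonneg (add_nonneg (div_nonneg (by norm_num) (by linarith))
          (div_nonneg (by norm_num) (by linarith))) (div_nonneg (by norm_num) habs.le)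
      calc (2 / (a + 1) + 2 / (b + 1) + 4 / (-(a + b + 1))) * R ^ (a + b + 1)
          ≤ (2 / (a + 1) + 2 / (b + 1) + 4 / (-(a + b + 1))) * (2 * |u - v| ^ (a + b + 1)) :=
            mul_le_mul_of_nonneg_left hRs hcoef
        _ = _ := by ring

lemma K_le (p q α : ℝ) (hpq : p < q) (hα1 : 1 < α) (hα2 : α < 2)
    (x w : ℝ) (hx : x ∈ Set.Ioo p q) (hw : w ∈ Set.Ioo p q) (hxw : x ≠ w) :
    min ((Metric.infDist x (Set.Ioo p q)ᶜ * Metric.infDist w (Set.Ioo p q)ᶜ) ^ ((α - 1) / 2))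
        ((Metric.infDist x (Set.Ioo p q)ᶜ * Metric.infDist w (Set.Ioo p q)ᶜ) ^ (α / 2) / |x - w|)
      ≤ 3 * (Metric.infDist x (Set.Ioo p q)ᶜ) ^ (α / 2) * |x - w| ^ (α / 2 - 1) := by
  set dx := Metric.infDist x (Set.Ioo p q)ᶜ with hdx
  set dw := Metric.infDist w (Set.Ioo p q)ᶜ with hdw
  have hclosed : IsClosed (Set.Ioo p q)ᶜ := isOpen_Ioo.isClosed_compl
  have hne : ((Set.Ioo p q)ᶜ : Set ℝ).Nonempty := ⟨p, by simp⟩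
  have hdxpos : 0 < dx := (hclosed.notMem_iff_infDist_pos hne).mp (by simp [hx])
  have hdwpos : 0 < dw := (hclosed.notMem_iff_infDist_pos hne).mp (by simp [hw])
  set r := |x - w| with hr
  have hrpos : 0 < r := abs_pos.mpr (sub_ne_zero.mpr hxw)
  have hlip : dw ≤ dx + r := by
    have := Metric.infDist_le_infDist_add_dist (x := w) (y := x) (s := (Set.Ioo p q)ᶜ)
    rwa [Real.dist_eq, abs_sub_comm] at this
  rcases le_or_gt dx (2 * r) with hcase | hcase
  · -- use the second term of the min
    refine (min_le_right _ _).trans ?_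
    have h1 : dw ≤ 3 * r := by linarith
    have h2 : (dx * dw) ^ (α / 2) ≤ (dx * (3 * r)) ^ (α / 2) :=
      Real.rpow_le_rpow (by positivity) (by nlinarith) (by linarith)
    have h3 : (dx * (3 * r)) ^ (α / 2) = dx ^ (α / 2) * (3 ^ (α / 2) * r ^ (α / 2)) := by
      rw [Real.mul_rpow hdxpos.le (by positivity), Real.mul_rpow (by norm_num) hrpos.le]
    have h4 : (3 : ℝ) ^ (α / 2) ≤ 3 := by
      calc (3 : ℝ) ^ (α / 2) ≤ 3 ^ (1 : ℝ) :=
            Real.rpow_le_rpow_of_exponent_le (by norm_num) (by linarith)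
        _ = 3 := Real.rpow_one 3
    have h5 : r ^ (α / 2 - 1) = r ^ (α / 2) / r := by
      rw [show α / 2 - 1 = α / 2 + (-1) by ring, Real.rpow_add hrpos, Real.rpow_neg_one]
      ring
    calc (dx * dw) ^ (α / 2) / r ≤ dx ^ (α / 2) * (3 ^ (α / 2) * r ^ (α / 2)) / r := by
          rw [← h3]; exact div_le_div_of_nonneg_right h2 hrpos.le
      _ ≤ dx ^ (α / 2) * (3 * r ^ (α / 2)) / r := by
          apply div_le_div_of_nonneg_right _ hrpos.le
          apply mul_le_mul_of_nonneg_left _ (Real.rpow_nonneg hdxpos.le _)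
          exact mul_le_mul_of_nonneg_right h4 (Real.rpow_nonneg hrpos.le _)
      _ = 3 * dx ^ (α / 2) * r ^ (α / 2 - 1) := by rw [h5]; ring
  · -- use the first term of the min
    refine (min_le_left _ _).trans ?_
    have h1 : dw ≤ 2 * dx := by linarith
    have e := (α - 1) / 2
    have h2 : (dx * dw) ^ ((α - 1) / 2) ≤ (2 * (dx * dx)) ^ ((α - 1) / 2) :=
      Real.rpow_le_rpow (by positivity) (by nlinarith) (by linarith)
    have h3 : (2 * (dx * dx)) ^ ((α - 1) / 2)
        = 2 ^ ((α - 1) / 2) * (dx ^ ((α - 1) / 2) * dx ^ ((α - 1) / 2)) := by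
      rw [Real.mul_rpow (by norm_num) (by positivity), Real.mul_rpow hdxpos.le hdxpos.le]
    have h4 : (2 : ℝ) ^ ((α - 1) / 2) ≤ 2 := by
      calc (2 : ℝ) ^ ((α - 1) / 2) ≤ 2 ^ (1 : ℝ) :=
            Real.rpow_le_rpow_of_exponent_le (by norm_num) (by linarith)
        _ = 2 := Real.rpow_one 2
    have h5 : dx ^ ((α - 1) / 2) * dx ^ ((α - 1) / 2) = dx ^ (α / 2) * dx ^ (α / 2 - 1) := by
      rw [← Real.rpow_add hdxpos, ← Real.rpow_add hdxpos]
      congr 1; ring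
    have h6 : dx ^ (α / 2 - 1) ≤ (2 * r) ^ (α / 2 - 1) :=
      Real.rpow_le_rpow_of_nonpos (by linarith) hcase.le (by linarith)
    have h7 : (2 * r) ^ (α / 2 - 1) = 2 ^ (α / 2 - 1) * r ^ (α / 2 - 1) :=
      Real.mul_rpow (by norm_num) hrpos.le
    have h8 : (2 : ℝ) ^ (α / 2 - 1) ≤ 1 :=
      Real.rpow_le_one_of_one_le_of_nonpos (by norm_num) (by linarith)
    have h9 : dx ^ (α / 2 - 1) ≤ r ^ (α / 2 - 1) := by
      refine h6.trans ?_
      rw [h7]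
      nlinarith [Real.rpow_nonneg hrpos.le (α / 2 - 1)]
    calc (dx * dw) ^ ((α - 1) / 2) ≤ 2 ^ ((α - 1) / 2) * (dx ^ (α / 2) * dx ^ (α / 2 - 1)) := by
          rw [← h5, ← h3]; exact h2
      _ ≤ 2 * (dx ^ (α / 2) * dx ^ (α / 2 - 1)) := by
          apply mul_le_mul_of_nonneg_right h4
          positivity
      _ ≤ 2 * (dx ^ (α / 2) * r ^ (α / 2 - 1)) := by
          apply mul_le_mul_of_nonneg_left _ (by norm_num)
          exact mul_le_mul_of_nonneg_left h9 (Real.rpow_nonneg hdxpos.le _)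
      _ ≤ 3 * dx ^ (α / 2) * r ^ (α / 2 - 1) := by
          nlinarith [Real.rpow_nonneg hdxpos.le (α / 2), Real.rpow_nonneg hrpos.le (α / 2 - 1),
            mul_nonneg (Real.rpow_nonneg hdxpos.le (α / 2)) (Real.rpow_nonneg hrpos.le (α / 2 - 1))]

/-- One-dimensional perturbation-term estimate: for a bounded open interval
`D = (p, q)`, `1 < α < 2`, `ϱ > 0`, with `δ_D(x) = dist(x, Dᶜ)`,
`K(x,w) = min{(δ_D(x)δ_D(w))^{(α-1)/2}, (δ_D(x)δ_D(w))^{α/2}/|x-w|}`, and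
`σ ≥ 0` with `σ(w) ≤ c |w|^{ϱ-1}` for `0 < |w| ≤ diam D = q - p`, there is a constant
`C = C(α, ϱ, c, diam D)` such that for all `x ≠ y` in `D`,
`∫_D ∫_D K(x,w) σ(w-z) K(z,y) dw dz
  ≤ C (δ_D(x)δ_D(y))^{α/2} |x-y|^{(ϱ∧1)-1}`. -/
theorem one_dim_perturbation_estimate (p q : ℝ) (hpq : p < q)
    (α ϱ : ℝ) (hα1 : 1 < α) (hα2 : α < 2) (hϱ : 0 < ϱ)
    (σ : ℝ → ℝ) (hσ0 : ∀ w, 0 ≤ σ w) (c : ℝ)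
    (hσbd : ∀ w : ℝ, w ≠ 0 → |w| ≤ q - p → σ w ≤ c * |w| ^ (ϱ - 1)) :
    ∃ C : ℝ, 0 < C ∧
      ∀ x ∈ Set.Ioo p q, ∀ y ∈ Set.Ioo p q, x ≠ y →
        (∫⁻ z in Set.Ioo p q, ∫⁻ w in Set.Ioo p q,
          ENNReal.ofReal
            (min ((Metric.infDist x (Set.Ioo p q)ᶜ *
                    Metric.infDist w (Set.Ioo p q)ᶜ) ^ ((α - 1) / 2))
                ((Metric.infDist x (Set.Ioo p q)ᶜ *
                    Metric.infDist w (Set.Ioo p q)ᶜ) ^ (α / 2) / |x - w|) *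
              σ (w - z) *
              min ((Metric.infDist z (Set.Ioo p q)ᶜ *
                    Metric.infDist y (Set.Ioo p q)ᶜ) ^ ((α - 1) / 2))
                ((Metric.infDist z (Set.Ioo p q)ᶜ *
                    Metric.infDist y (Set.Ioo p q)ᶜ) ^ (α / 2) / |z - y|))) ≤
          ENNReal.ofReal
            (C * (Metric.infDist x (Set.Ioo p q)ᶜ *
                Metric.infDist y (Set.Ioo p q)ᶜ) ^ (α / 2) *
              |x - y| ^ (min ϱ 1 - 1)) := by
  have hL : 0 < q - p := sub_pos.mpr hpq
  set ρ₀ : ℝ := min ϱ ((1 - α / 2) / 2) with hρ₀def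
  have hρ₀pos : 0 < ρ₀ := lt_min hϱ (by linarith)
  have hρ₀ϱ : ρ₀ ≤ ϱ := min_le_left _ _
  have hρ₀β : ρ₀ ≤ (1 - α / 2) / 2 := min_le_right _ _
  have hbρ0 : α / 2 - 1 + ρ₀ < 0 := by linarith
  have hbρ1 : (-1 : ℝ) < α / 2 - 1 + ρ₀ := by linarith
  set c₁ : ℝ := max c 1 with hc₁def
  have hc₁pos : (0 : ℝ) < c₁ := lt_of_lt_of_le one_pos (le_max_right c 1)
  set CC1 : ℝ := (2 / (α / 2 - 1 + 1) + 2 / (ρ₀ - 1 + 1) + 4 / (-(α / 2 - 1 + (ρ₀ - 1) + 1))) * 2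
    with hCC1def
  have hCC1pos : 0 < CC1 := by
    apply mul_pos _ two_pos
    have h1 : (0:ℝ) < 2 / (α / 2 - 1 + 1) := div_pos two_pos (by linarith)
    have h2 : (0:ℝ) < 2 / (ρ₀ - 1 + 1) := div_pos two_pos (by linarith)
    have h3 : (0:ℝ) < 4 / (-(α / 2 - 1 + (ρ₀ - 1) + 1)) := div_pos (by norm_num) (by linarith)
    linarith
  set CC2 : ℝ := 4 / (α / 2 - 1 + ρ₀ + (α / 2 - 1) + 1) * (q - p) ^ (α / 2 - 1 + ρ₀ + (α / 2 - 1) + 1)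
    with hCC2def
  have hCC2pos : 0 < CC2 :=
    mul_pos (div_pos (by norm_num) (by linarith)) (Real.rpow_pos_of_pos hL _)
  refine ⟨9 * c₁ * (q - p) ^ (ϱ - ρ₀) * CC1 * CC2 * (q - p) ^ (1 - min ϱ 1), ?_, ?_⟩
  · have := Real.rpow_pos_of_pos hL (ϱ - ρ₀)
    have := Real.rpow_pos_of_pos hL (1 - min ϱ 1)
    positivity
  intro x hx y hy hxy
  set dx := Metric.infDist x (Set.Ioo p q)ᶜ with hdxdef
  set dy := Metric.infDist y (Set.Ioo p q)ᶜ with hdydef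
  have hclosed : IsClosed (Set.Ioo p q)ᶜ := isOpen_Ioo.isClosed_compl
  have hne : ((Set.Ioo p q)ᶜ : Set ℝ).Nonempty := ⟨p, by simp⟩
  have hdxpos : 0 < dx := (hclosed.notMem_iff_infDist_pos hne).mp (by simp [hx])
  have hdypos : 0 < dy := (hclosed.notMem_iff_infDist_pos hne).mp (by simp [hy])
  set M0 : ℝ := 9 * c₁ * (q - p) ^ (ϱ - ρ₀) * dx ^ (α / 2) * dy ^ (α / 2) with hM0def
  have hM0nn : 0 ≤ M0 := by
    have := Real.rpow_pos_of_pos hL (ϱ - ρ₀)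
    have := Real.rpow_pos_of_pos hdxpos (α / 2)
    have := Real.rpow_pos_of_pos hdypos (α / 2)
    positivity
  -- σ bound
  have hσ' : ∀ t : ℝ, t ≠ 0 → |t| ≤ q - p →
      σ t ≤ c₁ * (q - p) ^ (ϱ - ρ₀) * |t| ^ (ρ₀ - 1) := by
    intro t ht htL
    have h0 : 0 < |t| := abs_pos.mpr ht
    have h2 : c * |t| ^ (ϱ - 1) ≤ c₁ * |t| ^ (ϱ - 1) :=
      mul_le_mul_of_nonneg_right (le_max_left c 1) (Real.rpow_nonneg (abs_nonneg t) _)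
    have h3 : |t| ^ (ϱ - 1) = |t| ^ (ϱ - ρ₀) * |t| ^ (ρ₀ - 1) := by
      rw [← Real.rpow_add h0]; congr 1; ring
    have h4 : |t| ^ (ϱ - ρ₀) ≤ (q - p) ^ (ϱ - ρ₀) :=
      Real.rpow_le_rpow (abs_nonneg t) htL (by linarith)
    calc σ t ≤ c * |t| ^ (ϱ - 1) := hσbd t ht htL
      _ ≤ c₁ * |t| ^ (ϱ - 1) := h2
      _ = c₁ * (|t| ^ (ϱ - ρ₀) * |t| ^ (ρ₀ - 1)) := by rw [h3]
      _ ≤ c₁ * ((q - p) ^ (ϱ - ρ₀) * |t| ^ (ρ₀ - 1)) :=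
          mul_le_mul_of_nonneg_left
            (mul_le_mul_of_nonneg_right h4 (Real.rpow_nonneg (abs_nonneg t) _)) hc₁pos.le
      _ = c₁ * (q - p) ^ (ϱ - ρ₀) * |t| ^ (ρ₀ - 1) := by ring
  -- inner integral bound for a.e. z
  have hinner : ∀ z ∈ Set.Ioo p q, z ≠ x → z ≠ y →
      (∫⁻ w in Set.Ioo p q,
        ENNReal.ofReal
          (min ((dx * Metric.infDist w (Set.Ioo p q)ᶜ) ^ ((α - 1) / 2))
              ((dx * Metric.infDist w (Set.Ioo p q)ᶜ) ^ (α / 2) / |x - w|) *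
            σ (w - z) *
            min ((Metric.infDist z (Set.Ioo p q)ᶜ * dy) ^ ((α - 1) / 2))
              ((Metric.infDist z (Set.Ioo p q)ᶜ * dy) ^ (α / 2) / |z - y|)))
        ≤ ENNReal.ofReal ((M0 * CC1) * (|z - x| ^ (α / 2 - 1 + ρ₀) * |z - y| ^ (α / 2 - 1))) := by
    intro z hz hzx hzy
    set dz := Metric.infDist z (Set.Ioo p q)ᶜ with hdzdef
    have hKzy : min ((dz * dy) ^ ((α - 1) / 2)) ((dz * dy) ^ (α / 2) / |z - y|)
        ≤ 3 * dy ^ (α / 2) * |z - y| ^ (α / 2 - 1) := by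
      have h := K_le p q α hpq hα1 hα2 y z hy hz (fun h => hzy h.symm)
      rwa [mul_comm dy dz, abs_sub_comm y z] at h
    have hKzy0 : 0 ≤ min ((dz * dy) ^ ((α - 1) / 2)) ((dz * dy) ^ (α / 2) / |z - y|) :=
      le_min (Real.rpow_nonneg (mul_nonneg Metric.infDist_nonneg Metric.infDist_nonneg) _)
        (div_nonneg
          (Real.rpow_nonneg (mul_nonneg Metric.infDist_nonneg Metric.infDist_nonneg) _)
          (abs_nonneg _))
    have hnull : ∀ᵐ w : ℝ, w ∉ ({x, z} : Set ℝ) :=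
      measure_eq_zero_iff_ae_notMem.mp (((Set.finite_singleton z).insert x).measure_zero _)
    have hM0z : 0 ≤ M0 * |z - y| ^ (α / 2 - 1) :=
      mul_nonneg hM0nn (Real.rpow_nonneg (abs_nonneg _) _)
    have hbound : ∀ᵐ w ∂(volume.restrict (Set.Ioo p q)),
        ENNReal.ofReal
          (min ((dx * Metric.infDist w (Set.Ioo p q)ᶜ) ^ ((α - 1) / 2))
              ((dx * Metric.infDist w (Set.Ioo p q)ᶜ) ^ (α / 2) / |x - w|) *
            σ (w - z) *
            min ((dz * dy) ^ ((α - 1) / 2)) ((dz * dy) ^ (α / 2) / |z - y|))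
          ≤ ENNReal.ofReal ((M0 * |z - y| ^ (α / 2 - 1))
              * (|w - x| ^ (α / 2 - 1) * |w - z| ^ (ρ₀ - 1))) := by
      filter_upwards [self_mem_ae_restrict measurableSet_Ioo, ae_restrict_of_ae hnull]
        with w hwD hwnm
      have hwx : x ≠ w := fun h => hwnm (by simp [h])
      have hwz : w ≠ z := fun h => hwnm (by simp [h])
      apply ENNReal.ofReal_le_ofReal
      have hK1 : min ((dx * Metric.infDist w (Set.Ioo p q)ᶜ) ^ ((α - 1) / 2))
          ((dx * Metric.infDist w (Set.Ioo p q)ᶜ) ^ (α / 2) / |x - w|)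
          ≤ 3 * dx ^ (α / 2) * |x - w| ^ (α / 2 - 1) :=
        K_le p q α hpq hα1 hα2 x w hx hwD hwx
      have hK10 : 0 ≤ min ((dx * Metric.infDist w (Set.Ioo p q)ᶜ) ^ ((α - 1) / 2))
          ((dx * Metric.infDist w (Set.Ioo p q)ᶜ) ^ (α / 2) / |x - w|) :=
        le_min (Real.rpow_nonneg (mul_nonneg Metric.infDist_nonneg Metric.infDist_nonneg) _)
          (div_nonneg
            (Real.rpow_nonneg (mul_nonneg Metric.infDist_nonneg Metric.infDist_nonneg) _)
            (abs_nonneg _))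
      have hwzL : |w - z| ≤ q - p := by
        rw [abs_le]; constructor <;> [linarith [hwD.1, hz.2]; linarith [hwD.2, hz.1]]
      have hσw : σ (w - z) ≤ c₁ * (q - p) ^ (ϱ - ρ₀) * |w - z| ^ (ρ₀ - 1) :=
        hσ' (w - z) (sub_ne_zero.mpr hwz) hwzL
      have hb1nn : 0 ≤ 3 * dx ^ (α / 2) * |x - w| ^ (α / 2 - 1) := by
        have := Real.rpow_nonneg hdxpos.le (α / 2)
        have := Real.rpow_nonneg (abs_nonneg (x - w)) (α / 2 - 1)
        positivity
      have hb2nn : 0 ≤ c₁ * (q - p) ^ (ϱ - ρ₀) * |w - z| ^ (ρ₀ - 1) := by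
        have := Real.rpow_nonneg hL.le (ϱ - ρ₀)
        have := Real.rpow_nonneg (abs_nonneg (w - z)) (ρ₀ - 1)
        positivity
      have hb3nn : 0 ≤ 3 * dy ^ (α / 2) * |z - y| ^ (α / 2 - 1) := by
        have := Real.rpow_nonneg hdypos.le (α / 2)
        have := Real.rpow_nonneg (abs_nonneg (z - y)) (α / 2 - 1)
        positivity
      calc min ((dx * Metric.infDist w (Set.Ioo p q)ᶜ) ^ ((α - 1) / 2))
            ((dx * Metric.infDist w (Set.Ioo p q)ᶜ) ^ (α / 2) / |x - w|) *
            σ (w - z) *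
            min ((dz * dy) ^ ((α - 1) / 2)) ((dz * dy) ^ (α / 2) / |z - y|)
          ≤ (3 * dx ^ (α / 2) * |x - w| ^ (α / 2 - 1)) *
            (c₁ * (q - p) ^ (ϱ - ρ₀) * |w - z| ^ (ρ₀ - 1)) *
            (3 * dy ^ (α / 2) * |z - y| ^ (α / 2 - 1)) := by
            apply mul_le_mul _ hKzy hKzy0 (mul_nonneg hb1nn hb2nn)
            exact mul_le_mul hK1 hσw (hσ0 _) hb1nn
        _ = (M0 * |z - y| ^ (α / 2 - 1)) * (|w - x| ^ (α / 2 - 1) * |w - z| ^ (ρ₀ - 1)) := by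
            rw [hM0def, abs_sub_comm x w]; ring
    calc (∫⁻ w in Set.Ioo p q,
          ENNReal.ofReal
            (min ((dx * Metric.infDist w (Set.Ioo p q)ᶜ) ^ ((α - 1) / 2))
                ((dx * Metric.infDist w (Set.Ioo p q)ᶜ) ^ (α / 2) / |x - w|) *
              σ (w - z) *
              min ((dz * dy) ^ ((α - 1) / 2)) ((dz * dy) ^ (α / 2) / |z - y|)))
        ≤ ∫⁻ w in Set.Ioo p q,
            ENNReal.ofReal ((M0 * |z - y| ^ (α / 2 - 1))
              * (|w - x| ^ (α / 2 - 1) * |w - z| ^ (ρ₀ - 1))) := lintegral_mono_ae hbound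
      _ = ENNReal.ofReal (M0 * |z - y| ^ (α / 2 - 1))
          * ∫⁻ w in Set.Ioo p q,
              ENNReal.ofReal (|w - x| ^ (α / 2 - 1) * |w - z| ^ (ρ₀ - 1)) := by
          simp_rw [ENNReal.ofReal_mul hM0z]
          exact lintegral_const_mul' _ _ ENNReal.ofReal_ne_top
      _ ≤ ENNReal.ofReal (M0 * |z - y| ^ (α / 2 - 1))
          * ENNReal.ofReal ((2 / (α / 2 - 1 + 1) + 2 / (ρ₀ - 1 + 1)
              + 4 / (-(α / 2 - 1 + (ρ₀ - 1) + 1))) * 2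
              * |x - z| ^ (α / 2 - 1 + (ρ₀ - 1) + 1)) :=
          mul_le_mul_right
            (conv_singular p q x z (α / 2 - 1) (ρ₀ - 1) hpq (Set.Ioo_subset_Icc_self hx)
              (Set.Ioo_subset_Icc_self hz) (fun h => hzx h.symm) (by linarith) (by linarith)
              (by linarith) (by linarith) (by linarith)) _
      _ = ENNReal.ofReal ((M0 * CC1) * (|z - x| ^ (α / 2 - 1 + ρ₀) * |z - y| ^ (α / 2 - 1))) := by
          rw [← ENNReal.ofReal_mul hM0z]
          congr 1
          rw [hCC1def, abs_sub_comm x z, show α / 2 - 1 + (ρ₀ - 1) + 1 = α / 2 - 1 + ρ₀ by ring]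
          ring
  -- outer integral
  have hnull2 : ∀ᵐ z : ℝ, z ∉ ({x, y} : Set ℝ) :=
    measure_eq_zero_iff_ae_notMem.mp (((Set.finite_singleton y).insert x).measure_zero _)
  have hM0CC1 : 0 ≤ M0 * CC1 := mul_nonneg hM0nn hCC1pos.le
  have houter : ∀ᵐ z ∂(volume.restrict (Set.Ioo p q)),
      (∫⁻ w in Set.Ioo p q,
        ENNReal.ofReal
          (min ((dx * Metric.infDist w (Set.Ioo p q)ᶜ) ^ ((α - 1) / 2))
              ((dx * Metric.infDist w (Set.Ioo p q)ᶜ) ^ (α / 2) / |x - w|) *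
            σ (w - z) *
            min ((Metric.infDist z (Set.Ioo p q)ᶜ * dy) ^ ((α - 1) / 2))
              ((Metric.infDist z (Set.Ioo p q)ᶜ * dy) ^ (α / 2) / |z - y|)))
        ≤ ENNReal.ofReal ((M0 * CC1)
            * (|z - x| ^ (α / 2 - 1 + ρ₀) * |z - y| ^ (α / 2 - 1))) := by
    filter_upwards [self_mem_ae_restrict measurableSet_Ioo, ae_restrict_of_ae hnull2]
      with z hzD hznm
    exact hinner z hzD (fun h => hznm (by simp [h])) (fun h => hznm (by simp [h]))
  have hxyL : |x - y| ≤ q - p := by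
    rw [abs_le]; constructor <;> [linarith [hx.1, hy.2]; linarith [hx.2, hy.1]]
  have hxy0 : 0 < |x - y| := abs_pos.mpr (sub_ne_zero.mpr hxy)
  have hmin1 : min ϱ 1 - 1 ≤ 0 := by have := min_le_right ϱ 1; linarith
  calc (∫⁻ z in Set.Ioo p q, ∫⁻ w in Set.Ioo p q,
        ENNReal.ofReal
          (min ((dx * Metric.infDist w (Set.Ioo p q)ᶜ) ^ ((α - 1) / 2))
              ((dx * Metric.infDist w (Set.Ioo p q)ᶜ) ^ (α / 2) / |x - w|) *
            σ (w - z) *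
            min ((Metric.infDist z (Set.Ioo p q)ᶜ * dy) ^ ((α - 1) / 2))
              ((Metric.infDist z (Set.Ioo p q)ᶜ * dy) ^ (α / 2) / |z - y|)))
      ≤ ∫⁻ z in Set.Ioo p q,
          ENNReal.ofReal ((M0 * CC1)
            * (|z - x| ^ (α / 2 - 1 + ρ₀) * |z - y| ^ (α / 2 - 1))) :=
      lintegral_mono_ae houter
    _ = ENNReal.ofReal (M0 * CC1)
        * ∫⁻ z in Set.Ioo p q,
            ENNReal.ofReal (|z - x| ^ (α / 2 - 1 + ρ₀) * |z - y| ^ (α / 2 - 1)) := by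
        simp_rw [ENNReal.ofReal_mul hM0CC1]
        exact lintegral_const_mul' _ _ ENNReal.ofReal_ne_top
    _ ≤ ENNReal.ofReal (M0 * CC1)
        * ENNReal.ofReal (4 / (α / 2 - 1 + ρ₀ + (α / 2 - 1) + 1)
            * (q - p) ^ (α / 2 - 1 + ρ₀ + (α / 2 - 1) + 1)) :=
        mul_le_mul_right
          (conv_bounded p q x y (α / 2 - 1 + ρ₀) (α / 2 - 1) hpq (Set.Ioo_subset_Icc_self hx)
            (Set.Ioo_subset_Icc_self hy) hbρ0 (by linarith) (by linarith)) _
    _ = ENNReal.ofReal (M0 * CC1 * CC2) := by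
        rw [← ENNReal.ofReal_mul hM0CC1, hCC2def]
    _ ≤ ENNReal.ofReal (9 * c₁ * (q - p) ^ (ϱ - ρ₀) * CC1 * CC2 * (q - p) ^ (1 - min ϱ 1)
          * (dx * dy) ^ (α / 2) * |x - y| ^ (min ϱ 1 - 1)) := by
        apply ENNReal.ofReal_le_ofReal
        have h1 : (q - p) ^ (min ϱ 1 - 1) ≤ |x - y| ^ (min ϱ 1 - 1) :=
          Real.rpow_le_rpow_of_nonpos hxy0 hxyL hmin1
        have h3 : (q - p) ^ (1 - min ϱ 1) * (q - p) ^ (min ϱ 1 - 1) = 1 := by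
          rw [← Real.rpow_add hL]
          norm_num
        have h2 : 1 ≤ (q - p) ^ (1 - min ϱ 1) * |x - y| ^ (min ϱ 1 - 1) := by
          calc (1:ℝ) = (q - p) ^ (1 - min ϱ 1) * (q - p) ^ (min ϱ 1 - 1) := h3.symm
            _ ≤ (q - p) ^ (1 - min ϱ 1) * |x - y| ^ (min ϱ 1 - 1) :=
              mul_le_mul_of_nonneg_left h1 (Real.rpow_nonneg hL.le _)
        have hbase : 0 ≤ 9 * c₁ * (q - p) ^ (ϱ - ρ₀) * CC1 * CC2 * (dx ^ (α / 2) * dy ^ (α / 2)) := by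
          have := Real.rpow_nonneg hL.le (ϱ - ρ₀)
          have := Real.rpow_nonneg hdxpos.le (α / 2)
          have := Real.rpow_nonneg hdypos.le (α / 2)
          positivity
        calc M0 * CC1 * CC2
            = (9 * c₁ * (q - p) ^ (ϱ - ρ₀) * CC1 * CC2 * (dx ^ (α / 2) * dy ^ (α / 2))) * 1 := by
              rw [hM0def]; ring
          _ ≤ (9 * c₁ * (q - p) ^ (ϱ - ρ₀) * CC1 * CC2 * (dx ^ (α / 2) * dy ^ (α / 2)))
              * ((q - p) ^ (1 - min ϱ 1) * |x - y| ^ (min ϱ 1 - 1)) :=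
              mul_le_mul_of_nonneg_left h2 hbase
          _ = 9 * c₁ * (q - p) ^ (ϱ - ρ₀) * CC1 * CC2 * (q - p) ^ (1 - min ϱ 1)
              * (dx * dy) ^ (α / 2) * |x - y| ^ (min ϱ 1 - 1) := by
              rw [Real.mul_rpow hdxpos.le hdypos.le]; ring
end
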